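/- arXiv:2210.06363 — 9 statements merged into one kernel-verified Lean document; each statement's English description precedes it below -/
import Mathlib

section
/- Suppose every node of a labeled graph is 1-color (its incident edges all carry the same single label, and every node is incident to at least one edge). Then for every prime p with p ≥ N there exists a storage code with source alphabet S = (Fin 2 → ZMod p) and coded alphabet T = ZMod p; in particular symbol rate 2 is achievable over such graphs. -/
/-- A storage code problem over a labeled graph: `N` nodes, `K` sources, and a
symmetric labeling `t` of pairs of nodes by sources, with no self-loops. -/
structure LabeledGraph (N K : ℕ) where
  t : Fin N → Fin N → Option (Fin K)
  symm : ∀ i j, t i j = t j i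
  irrefl : ∀ i, t i i = none

/-- `V` is a storage code over `G`: from the coded symbols at the two endpoints of
any `W_k`-edge, the source symbol `W_k` can be decoded. -/
def IsStorageCode {N K : ℕ} (G : LabeledGraph N K) (S T : Type)
    (V : Fin N → (Fin K → S) → T) : Prop :=
  ∀ i j k, G.t i j = some k →
    ∃ D : T → T → S, ∀ w : Fin K → S, D (V i w) (V j w) = w k

/-- The set of source labels carried by the edges incident to node `i`. -/
def colorSet {N K : ℕ} (G : LabeledGraph N K) (i : Fin N) : Set (Fin K) :=
  {k | ∃ j, G.t i j = some k}

/-- Node `i` is `M`-color: its incident edges carry exactly `M` distinct labels. -/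
def IsMColor {N K : ℕ} (G : LabeledGraph N K) (i : Fin N) (M : ℕ) : Prop :=
  (colorSet G i).ncard = M

/-!
Each node `i` has a single color `c i`, and both endpoints of a `W_k`-edge have color `k`.
Node `i` stores the value at a point `x i` of the line `X ↦ w (c i) 0 + X * w (c i) 1`, the
points `x i ∈ 𝔽_p` being pairwise distinct (possible as `N ≤ p`). The two endpoints of a
`W_k`-edge thus hold the values of one line at two distinct points, which determine both of its
coefficients `w k 0` and `w k 1`.
-/

namespace LabeledGraph

variable {N K : ℕ} (G : LabeledGraph N K)

theorem ne_of_t_eq_some {i j : Fin N} {k : Fin K} (h : G.t i j = some k) : i ≠ j := by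
  rintro rfl
  simp [G.irrefl] at h

theorem mem_colorSet_left {i j : Fin N} {k : Fin K} (h : G.t i j = some k) :
    k ∈ colorSet G i :=
  ⟨j, h⟩

theorem mem_colorSet_right {i j : Fin N} {k : Fin K} (h : G.t i j = some k) :
    k ∈ colorSet G j :=
  ⟨i, (G.symm j i).trans h⟩

theorem exists_color_of_isMColor_one (h1 : ∀ i, IsMColor G i 1) :
    ∃ c : Fin N → Fin K, ∀ i j k, G.t i j = some k → c i = k ∧ c j = k := by
  choose c hc using fun i => Set.ncard_eq_one.mp (h1 i)
  refine ⟨c, fun i j k h => ⟨?_, ?_⟩⟩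
  · simpa [hc i, eq_comm] using G.mem_colorSet_left h
  · simpa [hc j, eq_comm] using G.mem_colorSet_right h

end LabeledGraph

section LinearInterpolation

variable {F : Type*} [Field F]

def evalLine (x : F) (v : Fin 2 → F) : F := v 0 + x * v 1

def interpolateLine (x y a b : F) : Fin 2 → F :=
  ![(x * b - y * a) / (x - y), (a - b) / (x - y)]

theorem interpolateLine_evalLine {x y : F} (hxy : x ≠ y) (v : Fin 2 → F) :
    interpolateLine x y (evalLine x v) (evalLine y v) = v := by
  have hxy' : x - y ≠ 0 := sub_ne_zero.mpr hxy
  ext s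
  fin_cases s
  · change (x * evalLine y v - y * evalLine x v) / (x - y) = v 0
    rw [div_eq_iff hxy', evalLine, evalLine]
    ring
  · change (evalLine x v - evalLine y v) / (x - y) = v 1
    rw [div_eq_iff hxy', evalLine, evalLine]
    ring

end LinearInterpolation

theorem isStorageCode_evalLine {N K : ℕ} (G : LabeledGraph N K) {F : Type} [Field F]
    {c : Fin N → Fin K} (hc : ∀ i j k, G.t i j = some k → c i = k ∧ c j = k)
    {x : Fin N → F} (hx : Function.Injective x) :
    IsStorageCode G (Fin 2 → F) F (fun i w => evalLine (x i) (w (c i))) := by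
  intro i j k h
  obtain ⟨hi, hj⟩ := hc i j k h
  refine ⟨interpolateLine (x i) (x j), fun w => ?_⟩
  dsimp only
  rw [hi, hj]
  exact interpolateLine_evalLine (hx.ne (G.ne_of_t_eq_some h)) (w k)

theorem ZMod.natCast_fin_injective_of_le {N p : ℕ} (hN : N ≤ p) :
    Function.Injective fun i : Fin N => (i : ZMod p) := by
  intro i j h
  have hi := ZMod.val_cast_of_lt (i.isLt.trans_le hN)
  have hj := ZMod.val_cast_of_lt (j.isLt.trans_le hN)
  exact Fin.ext (hi.symm.trans ((congrArg ZMod.val h).trans hj))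

/-- if every node is `1`-color, then for every prime `p ≥ N` there is a
storage code with `S = (Fin 2 → ZMod p)` and `T = ZMod p`, i.e. rate `2` is achievable. -/
theorem rate_two_achievable {N K : ℕ} (G : LabeledGraph N K)
    (h1 : ∀ i, IsMColor G i 1)
    (p : ℕ) (hp : p.Prime) (hpN : N ≤ p) :
    ∃ V : Fin N → (Fin K → (Fin 2 → ZMod p)) → ZMod p,
      IsStorageCode G (Fin 2 → ZMod p) (ZMod p) V := by
  have : Fact p.Prime := ⟨hp⟩
  obtain ⟨c, hc⟩ := G.exists_color_of_isMColor_one h1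
  exact ⟨_, isStorageCode_evalLine G hc (ZMod.natCast_fin_injective_of_le hpN)⟩
end

section
/- If some node i of a labeled graph is M-color with M ≥ 1 (the set of labels carried by edges incident to i has exactly M elements), then every storage code over the graph satisfies |S|^M ≤ |T|^(M+1); i.e., the symbol rate is at most (M+1)/M. In particular, a 2-color node forces |S|² ≤ |T|³ (rate at most 3/2). -/
/-- an `M`-color node with `M ≥ 1` forces `|S|^M ≤ |T|^(M+1)`,
i.e. symbol rate at most `(M+1)/M`. -/
theorem rate_le_of_MColor {N K : ℕ} (G : LabeledGraph N K) (S T : Type)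
    [Fintype S] [Fintype T] (V : Fin N → (Fin K → S) → T)
    (hV : IsStorageCode G S T V)
    (i : Fin N) (M : ℕ) (hM : 1 ≤ M) (hcolor : IsMColor G i M) :
    Fintype.card S ^ M ≤ Fintype.card T ^ (M + 1) := by
  classical
  rcases isEmpty_or_nonempty S with hS | hS
  · have : Fintype.card S = 0 := Fintype.card_eq_zero
    rw [this, Nat.zero_pow (by omega)]
    exact Nat.zero_le _
  obtain ⟨s0⟩ := hS
  set cs := colorSet G i with hcs
  have hfin : cs.Finite := Set.toFinite _
  have := hfin.fintype
  have hcard : Fintype.card cs = M := by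
    rw [← hcolor, Set.ncard_eq_toFinset_card', Set.toFinset_card]
  -- choose neighbor for each color
  have hj : ∀ k : cs, ∃ j, G.t i j = some (k : Fin K) := fun k => k.2
  choose j hjspec using hj
  -- the injection
  let ext : (cs → S) → (Fin K → S) := fun u k =>
    if h : k ∈ cs then u ⟨k, h⟩ else s0
  let f : (cs → S) → T × (cs → T) := fun u =>
    (V i (ext u), fun k => V (j k) (ext u))
  have hinj : Function.Injective f := by
    intro u u' huu
    funext k
    obtain ⟨D, hD⟩ := hV i (j k) k (hjspec k)
    have h1 := hD (ext u)
    have h2 := hD (ext u')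
    have e1 : (f u).1 = (f u').1 := by rw [huu]
    have e2 : (f u).2 k = (f u').2 k := by rw [huu]
    simp only [f] at e1 e2
    rw [e1, e2, h2] at h1
    have := h1.symm
    simpa only [ext, dif_pos k.2] using this
  have := Fintype.card_le_of_injective f hinj
  rw [Fintype.card_fun, Fintype.card_prod, Fintype.card_fun, hcard] at this
  calc Fintype.card S ^ M ≤ Fintype.card T * Fintype.card T ^ M := this
    _ = Fintype.card T ^ (M + 1) := by ring
end

section
/- Suppose in a labeled graph every node is 1-color or 2-color, every node is incident to at least one edge, and no two 2-color nodes are joined by an edge. Then for every prime p with p ≥ 2N there exists a storage code with source alphabet S = (Fin 3 → ZMod p) and coded alphabet T = (Fin 2 → ZMod p); in particular symbol rate 3/2 is achievable over such graphs. -/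
/-!
Every node `i` stores two symbols; its coordinate `m` holds the value of the quadratic polynomial
whose coefficients are the source `W_{c i m}` at a point `e (i, m)`, where `c i 0, c i 1` list the
colors of `i` (with repetition if `i` is 1-color) and the `2N` points are distinct, which needs a
field with at least `2N` elements. On a `W_k`-edge one endpoint is 1-color, so it holds the values
of the polynomial of `W_k` at two points, and the other endpoint holds its value at a third point:
three values of a quadratic polynomial determine it.
-/

open Function

def evalCoeffs {R : Type*} [CommRing R] {n : ℕ} (v : Fin n → R) (a : R) : R :=
  ∑ j, v j * a ^ (j : ℕ)

theorem eq_of_evalCoeffs_eq {R : Type*} [CommRing R] [IsDomain R] {n : ℕ} {y : Fin n → R}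
    (hy : Injective y) {v v' : Fin n → R} (h : ∀ m, evalCoeffs v (y m) = evalCoeffs v' (y m)) :
    v = v' := by
  refine sub_eq_zero.1 (Matrix.eq_zero_of_forall_index_sum_mul_pow_eq_zero hy fun m => ?_)
  simpa only [evalCoeffs, Pi.sub_apply, sub_mul, Finset.sum_sub_distrib, sub_eq_zero] using h m

namespace LabeledGraph

variable {N K : ℕ} (G : LabeledGraph N K)

theorem isStorageCode_of_determines {S T : Type} [Nonempty S] {V : Fin N → (Fin K → S) → T}
    (hV : ∀ i j k, G.t i j = some k →
      ∀ w w', V i w = V i w' → V j w = V j w' → w k = w' k) :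
    IsStorageCode G S T V := by
  intro i j k hk
  let f : (Fin K → S) → T × T := fun w => (V i w, V j w)
  refine ⟨fun a b => invFun f (a, b) k, fun w => ?_⟩
  have hf : f (invFun f (f w)) = f w := invFun_eq ⟨w, rfl⟩
  exact hV i j k hk _ _ (congrArg Prod.fst hf) (congrArg Prod.snd hf)

theorem exists_colorSet_eq_pair {i : Fin N} (h : IsMColor G i 1 ∨ IsMColor G i 2) :
    ∃ c : Fin 2 → Fin K, colorSet G i = {c 0, c 1} := by
  rcases h with h | h
  · obtain ⟨a, ha⟩ := Set.ncard_eq_one.1 h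
    exact ⟨![a, a], by simp [ha]⟩
  · obtain ⟨a, b, -, hab⟩ := Set.ncard_eq_two.1 h
    exact ⟨![a, b], by simp [hab]⟩

theorem isMColor_two_of_colorSet_eq_pair {i : Fin N} {a b : Fin K}
    (h : colorSet G i = {a, b}) (hab : a ≠ b) : IsMColor G i 2 := by
  rw [IsMColor, h, Set.ncard_pair hab]

end LabeledGraph

section PairCode

variable {R : Type} [CommRing R] {N K : ℕ}

def pairCode (c : Fin N → Fin 2 → Fin K) (e : Fin N × Fin 2 → R) :
    Fin N → (Fin K → Fin 3 → R) → Fin 2 → R :=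
  fun i w m => evalCoeffs (w (c i m)) (e (i, m))

variable [IsDomain R] {c : Fin N → Fin 2 → Fin K} {e : Fin N × Fin 2 → R}

theorem pairCode_determines_of_forall_color_eq {i j : Fin N} {k : Fin K} (he : Injective e)
    (hij : i ≠ j) (hi : ∀ m, c i m = k) {m' : Fin 2} (hj : c j m' = k)
    (w w' : Fin K → Fin 3 → R) (hwi : pairCode c e i w = pairCode c e i w')
    (hwj : pairCode c e j w = pairCode c e j w') : w k = w' k := by
  have hpts : Injective ![(i, 0), (i, 1), (j, m')] := by
    intro a b hab
    fin_cases a <;> fin_cases b <;> simp_all [eq_comm]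
  refine eq_of_evalCoeffs_eq (he.comp hpts) fun m => ?_
  fin_cases m
  · simpa [pairCode, hi] using congrFun hwi 0
  · simpa [pairCode, hi] using congrFun hwi 1
  · simpa [pairCode, hj] using congrFun hwj m'

theorem isStorageCode_pairCode (G : LabeledGraph N K) (he : Injective e)
    (hc : ∀ i, colorSet G i = {c i 0, c i 1})
    (hmono : ∀ i j, G.t i j ≠ none → c i 0 = c i 1 ∨ c j 0 = c j 1) :
    IsStorageCode G (Fin 3 → R) (Fin 2 → R) (pairCode c e) := by
  refine G.isStorageCode_of_determines fun i j k hk => ?_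
  have hij : i ≠ j := by
    rintro rfl
    simp [G.irrefl] at hk
  have hki : k = c i 0 ∨ k = c i 1 := by
    have hk' : k ∈ colorSet G i := ⟨j, hk⟩
    simpa [hc i] using hk'
  have hkj : k = c j 0 ∨ k = c j 1 := by
    have hk' : k ∈ colorSet G j := ⟨i, (G.symm j i).trans hk⟩
    simpa [hc j] using hk'
  have forall_eq_of_single {a : Fin N} (hk : k = c a 0 ∨ k = c a 1) (h : c a 0 = c a 1) :
      ∀ m, c a m = k := by
    intro m; fin_cases m <;> rcases hk with rfl | rfl <;> simp [h]
  have exists_eq {a : Fin N} (hk : k = c a 0 ∨ k = c a 1) : ∃ m, c a m = k := by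
    rcases hk with rfl | rfl
    exacts [⟨0, rfl⟩, ⟨1, rfl⟩]
  rcases hmono i j (by simp [hk]) with hi | hj
  · obtain ⟨m', hm'⟩ := exists_eq hkj
    exact fun w w' hwi hwj =>
      pairCode_determines_of_forall_color_eq he hij (forall_eq_of_single hki hi) hm' w w' hwi hwj
  · obtain ⟨m, hm⟩ := exists_eq hki
    exact fun w w' hwi hwj =>
      pairCode_determines_of_forall_color_eq he hij.symm (forall_eq_of_single hkj hj) hm w w' hwj hwi

end PairCode

/-- if every node is `1`-color or `2`-color and no two `2`-color nodes are
adjacent, then for every prime `p ≥ 2N` there is a storage code with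
`S = (Fin 3 → ZMod p)`, `T = (Fin 2 → ZMod p)`, i.e. rate `3/2` is achievable. -/
theorem rate_three_halves_achievable {N K : ℕ} (G : LabeledGraph N K)
    (h12 : ∀ i, IsMColor G i 1 ∨ IsMColor G i 2)
    (hno : ∀ i j, G.t i j ≠ none → ¬ (IsMColor G i 2 ∧ IsMColor G j 2))
    (p : ℕ) (hp : p.Prime) (hpN : 2 * N ≤ p) :
    ∃ V : Fin N → (Fin K → (Fin 3 → ZMod p)) → (Fin 2 → ZMod p),
      IsStorageCode G (Fin 3 → ZMod p) (Fin 2 → ZMod p) V := by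
  have := Fact.mk hp
  choose c hc using fun i => G.exists_colorSet_eq_pair (h12 i)
  obtain ⟨e⟩ : Nonempty (Fin N × Fin 2 ↪ ZMod p) :=
    Function.Embedding.nonempty_of_card_le (by simpa [ZMod.card, mul_comm] using hpN)
  refine ⟨pairCode c e, isStorageCode_pairCode G e.injective hc fun i j hij => ?_⟩
  by_contra! h
  exact hno i j hij ⟨G.isMColor_two_of_colorSet_eq_pair (hc i) h.1,
    G.isMColor_two_of_colorSet_eq_pair (hc j) h.2⟩
end

section
/- If a labeled graph contains an edge {i,j} (t i j = some k) such that both endpoints i and j are 2-color nodes, then every storage code over the graph satisfies |S|³ ≤ |T|⁴; i.e., the symbol rate is at most 4/3. -/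
/-- In a two-element set containing `k` there is an element different from `k`. -/
lemma exists_other_of_ncard_two {α : Type*} {s : Set α} {k : α}
    (h : s.ncard = 2) (hk : k ∈ s) : ∃ a ∈ s, a ≠ k := by
  obtain ⟨u, v, huv, rfl⟩ := Set.ncard_eq_two.mp h
  simp only [Set.mem_insert_iff, Set.mem_singleton_iff] at hk
  rcases hk with rfl | rfl
  · exact ⟨v, by simp, fun hvk => huv hvk.symm⟩
  · exact ⟨u, by simp, huv⟩

/-- For a family `A : S → S → T` such that the pair `(A x y, C x y)` determines `y`,
the total number of values of `A` appearing in the various columns is at most `|T|²`. -/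
lemma col_sum_le {S T : Type} [Fintype S] [Fintype T] [Nonempty S] [DecidableEq T]
    (A C : S → S → T)
    (h2 : ∀ x x' y y', A x y = A x' y' → C x y = C x' y' → y = y') :
    ∑ y : S, (Finset.univ.image fun x => A x y).card ≤ Fintype.card T ^ 2 := by
  classical
  rw [← Finset.card_sigma]
  set pick : (Σ _ : S, T) → S := fun p =>
    if h : ∃ x, A x p.1 = p.2 then h.choose else Classical.arbitrary S with hpick
  have hA : ∀ p ∈ (Finset.univ : Finset S).sigma
      (fun y => Finset.univ.image fun x => A x y), A (pick p) p.1 = p.2 := by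
    intro p hp
    rw [Finset.mem_sigma] at hp
    obtain ⟨x, -, hx⟩ := Finset.mem_image.mp hp.2
    have hex : ∃ x, A x p.1 = p.2 := ⟨x, hx⟩
    rw [hpick]
    simp only [dif_pos hex]
    exact hex.choose_spec
  have hcard : ((Finset.univ : Finset S).sigma
      (fun y => Finset.univ.image fun x => A x y)).card
      ≤ (Finset.univ : Finset (T × T)).card := by
    apply Finset.card_le_card_of_injOn (fun p => (p.2, C (pick p) p.1))
      (fun _ _ => Finset.mem_univ _)
    intro p hp q hq hpq
    simp only [Prod.mk.injEq] at hpq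
    obtain ⟨e1, e2⟩ := hpq
    have hy : p.1 = q.1 := h2 (pick p) (pick q) p.1 q.1
      (by rw [hA p hp, hA q hq, e1]) e2
    exact Sigma.ext hy (heq_of_eq e1)
  calc ((Finset.univ : Finset S).sigma
      (fun y => Finset.univ.image fun x => A x y)).card
      ≤ (Finset.univ : Finset (T × T)).card := hcard
    _ = Fintype.card T ^ 2 := by
        rw [Finset.card_univ, Fintype.card_prod]; ring

/-- The key counting bound: if on the square grid `S × S` we have functions
`A, B, C, E` into `T` such that `(A, B)` determines the row, `(A, C)` determines
the column, and `(B, E)` determines the column, then `|S|³ ≤ |T|⁴`. -/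
lemma grid_bound {S T : Type} [Fintype S] [Fintype T] [DecidableEq T] (A B C E : S → S → T)
    (h1 : ∀ x x' y, A x y = A x' y → B x y = B x' y → x = x')
    (h2 : ∀ x x' y y', A x y = A x' y' → C x y = C x' y' → y = y')
    (h3 : ∀ x x' y y', B x y = B x' y' → E x y = E x' y' → y = y') :
    Fintype.card S ^ 3 ≤ Fintype.card T ^ 4 := by
  classical
  rcases isEmpty_or_nonempty S with hS | hS
  · simp [Fintype.card_eq_zero]
  set q := Fintype.card S with hq
  set t := Fintype.card T with ht
  set NA : S → Finset T := fun y => Finset.univ.image fun x => A x y with hNA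
  set NB : S → Finset T := fun y => Finset.univ.image fun x => B x y with hNB
  have key1 : ∀ y : S, q ≤ (NA y).card * (NB y).card := by
    intro y
    have hc : (Finset.univ : Finset S).card ≤ ((NA y) ×ˢ (NB y)).card := by
      apply Finset.card_le_card_of_injOn (fun x => (A x y, B x y))
      · intro x _
        exact Finset.mem_product.mpr
          ⟨Finset.mem_image_of_mem _ (Finset.mem_univ x),
           Finset.mem_image_of_mem _ (Finset.mem_univ x)⟩
      · intro x _ x' _ hxx
        simp only [Prod.mk.injEq] at hxx
        exact h1 x x' y hxx.1 hxx.2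
    rw [Finset.card_univ, Finset.card_product] at hc
    exact hc
  have keyA : ∑ y : S, (NA y).card ≤ t ^ 2 := col_sum_le A C h2
  have keyB : ∑ y : S, (NB y).card ≤ t ^ 2 := col_sum_le B E h3
  obtain ⟨y0, -, hy0⟩ := Finset.exists_min_image Finset.univ
    (fun y => (NA y).card + (NB y).card) ⟨Classical.arbitrary S, Finset.mem_univ _⟩
  set na := (NA y0).card with hna
  set nb := (NB y0).card with hnb
  have hsum : q * (na + nb) ≤ 2 * t ^ 2 := by
    calc q * (na + nb) = (Finset.univ : Finset S).card • (na + nb) := by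
          rw [Finset.card_univ, smul_eq_mul]
      _ ≤ ∑ y : S, ((NA y).card + (NB y).card) :=
          Finset.card_nsmul_le_sum _ _ _ (fun y _ => hy0 y (Finset.mem_univ y))
      _ = (∑ y : S, (NA y).card) + ∑ y : S, (NB y).card := Finset.sum_add_distrib
      _ ≤ t ^ 2 + t ^ 2 := Nat.add_le_add keyA keyB
      _ = 2 * t ^ 2 := by ring
  have h5 : 4 * q ≤ (na + nb) ^ 2 := by
    have := key1 y0
    nlinarith [two_mul_le_add_sq na nb]
  have h6 : 4 * q ^ 3 ≤ 4 * t ^ 4 := by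
    calc 4 * q ^ 3 = (4 * q) * q ^ 2 := by ring
      _ ≤ (na + nb) ^ 2 * q ^ 2 := Nat.mul_le_mul_right _ h5
      _ = (q * (na + nb)) ^ 2 := by ring
      _ ≤ (2 * t ^ 2) ^ 2 := Nat.pow_le_pow_left hsum 2
      _ = 4 * t ^ 4 := by ring
  exact Nat.le_of_mul_le_mul_left h6 (by norm_num)

/-- an edge joining two `2`-color nodes forces `|S|³ ≤ |T|⁴`,
i.e. symbol rate at most `4/3`. -/
theorem rate_le_four_thirds {N K : ℕ} (G : LabeledGraph N K) (S T : Type)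
    [Fintype S] [Fintype T] (V : Fin N → (Fin K → S) → T)
    (hV : IsStorageCode G S T V)
    (i j : Fin N) (k : Fin K) (hij : G.t i j = some k)
    (hi : IsMColor G i 2) (hj : IsMColor G j 2) :
    Fintype.card S ^ 3 ≤ Fintype.card T ^ 4 := by
  classical
  rcases isEmpty_or_nonempty S with hS | hS
  · simp [Fintype.card_eq_zero]
  have hk_i : k ∈ colorSet G i := ⟨j, hij⟩
  have hk_j : k ∈ colorSet G j := ⟨i, by rw [G.symm]; exact hij⟩
  obtain ⟨a, ha_mem, hak⟩ := exists_other_of_ncard_two hi hk_i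
  obtain ⟨b, hb_mem, hbk⟩ := exists_other_of_ncard_two hj hk_j
  obtain ⟨i', hia⟩ := ha_mem
  obtain ⟨j', hjb⟩ := hb_mem
  obtain ⟨D1, hD1⟩ := hV i j k hij
  obtain ⟨D2, hD2⟩ := hV i i' a hia
  obtain ⟨D3, hD3⟩ := hV j j' b hjb
  by_cases hab : a = b
  · -- the two nodes share the same second color `a`
    subst hab
    set wf : S → S → (Fin K → S) := fun x y m =>
      if m = k then x else if m = a then y else Classical.arbitrary S with hwf
    have hwk : ∀ x y : S, wf x y k = x := by intro x y; simp [hwf]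
    have hwa : ∀ x y : S, wf x y a = y := by intro x y; simp [hwf, hak]
    apply grid_bound (fun x y => V i (wf x y)) (fun x y => V j (wf x y))
      (fun x y => V i' (wf x y)) (fun x y => V j' (wf x y))
    · intro x x' y eA eB
      have e1 : x = D1 (V i (wf x y)) (V j (wf x y)) := by rw [hD1, hwk]
      have e2 : x' = D1 (V i (wf x' y)) (V j (wf x' y)) := by rw [hD1, hwk]
      rw [e1, e2, eA, eB]
    · intro x x' y y' eA eC
      have e1 : y = D2 (V i (wf x y)) (V i' (wf x y)) := by rw [hD2, hwa]
      have e2 : y' = D2 (V i (wf x' y')) (V i' (wf x' y')) := by rw [hD2, hwa]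
      rw [e1, e2, eA, eC]
    · intro x x' y y' eB eE
      have e1 : y = D3 (V j (wf x y)) (V j' (wf x y)) := by rw [hD3, hwa]
      have e2 : y' = D3 (V j (wf x' y')) (V j' (wf x' y')) := by rw [hD3, hwa]
      rw [e1, e2, eB, eE]
  · -- the second colors differ: direct injection `S³ ↪ T⁴`
    have hba : b ≠ a := fun h => hab h.symm
    set wf : S → S → S → (Fin K → S) := fun x y z m =>
      if m = k then x else if m = a then y else if m = b then z
        else Classical.arbitrary S with hwf
    have hwk : ∀ x y z : S, wf x y z k = x := by intro x y z; simp [hwf]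
    have hwa : ∀ x y z : S, wf x y z a = y := by intro x y z; simp [hwf, hak]
    have hwb : ∀ x y z : S, wf x y z b = z := by intro x y z; simp [hwf, hbk, hba]
    set Φ : S × S × S → T × T × T × T := fun p =>
      (V i (wf p.1 p.2.1 p.2.2), V j (wf p.1 p.2.1 p.2.2),
       V i' (wf p.1 p.2.1 p.2.2), V j' (wf p.1 p.2.1 p.2.2)) with hΦ
    have hinj : Function.Injective Φ := by
      rintro ⟨x, y, z⟩ ⟨x', y', z'⟩ h
      simp only [hΦ, Prod.mk.injEq] at h
      obtain ⟨e1, e2, e3, e4⟩ := h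
      have hx : x = x' := by
        have p1 : x = D1 (V i (wf x y z)) (V j (wf x y z)) := by rw [hD1, hwk]
        have p2 : x' = D1 (V i (wf x' y' z')) (V j (wf x' y' z')) := by rw [hD1, hwk]
        rw [p1, p2, e1, e2]
      have hy : y = y' := by
        have p1 : y = D2 (V i (wf x y z)) (V i' (wf x y z)) := by rw [hD2, hwa]
        have p2 : y' = D2 (V i (wf x' y' z')) (V i' (wf x' y' z')) := by rw [hD2, hwa]
        rw [p1, p2, e1, e3]
      have hz : z = z' := by
        have p1 : z = D3 (V j (wf x y z)) (V j' (wf x y z)) := by rw [hD3, hwb]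
        have p2 : z' = D3 (V j (wf x' y' z')) (V j' (wf x' y' z')) := by rw [hD3, hwb]
        rw [p1, p2, e2, e4]
      simp [hx, hy, hz]
    have hc := Fintype.card_le_of_injective Φ hinj
    simp only [Fintype.card_prod] at hc
    calc Fintype.card S ^ 3
        = Fintype.card S * (Fintype.card S * Fintype.card S) := by ring
      _ ≤ Fintype.card T * (Fintype.card T * (Fintype.card T * Fintype.card T)) := hc
      _ = Fintype.card T ^ 4 := by ring
end

section
/- Let K = 2 (two sources). Suppose that for every internal edge of the labeled graph, every residing path of that edge contains at least one 1-color node (this hypothesis holds vacuously when the graph has no internal edge). Then for every prime p with p > 4·|E|, where |E| is the number of edges of the graph, there exists a storage code with source alphabet S = (Fin 4 → ZMod p) and coded alphabet T = (Fin 3 → ZMod p); in particular symbol rate 4/3 is achievable over such graphs. -/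
/-- A `W_k`-path: a sequence of `P ≥ 1` consecutive `W_k`-edges whose unordered
edges are pairwise distinct. -/
def IsPath {N K : ℕ} (G : LabeledGraph N K) (k : Fin K) (P : ℕ)
    (v : Fin (P + 1) → Fin N) : Prop :=
  1 ≤ P ∧ (∀ q : Fin P, G.t (v q.castSucc) (v q.succ) = some k) ∧
    Function.Injective (fun q : Fin P => s(v q.castSucc, v q.succ))
/-- The number of (unordered) edges of the labeled graph. -/
noncomputable def edgeCount {N K : ℕ} (G : LabeledGraph N K) : ℕ :=
  {e : Sym2 (Fin N) | ∃ i j, e = s(i, j) ∧ G.t i j ≠ none}.ncard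

/-!
Each source is a cubic over `F` (its four symbols are the coefficients), so every node stores
three linear functionals of the two cubics. A 1-color node of color `k` stores the `k`-th cubic
modulo `(X - ψ i)³`. A 2-color node `i` stores `P₀(θ₀) + cᵢ P₀'(θ₀)`, `P₁(θ₁) + cᵢ P₁'(θ₁)` and
`P₀'(θ₀) + P₁'(θ₁)`, where the point `θ_k` is shared by all 2-color nodes joined to `i` by a
path of `W_{k'}`-edges (`k' ≠ k`) through 2-color nodes.

Across a `W_k`-edge between 2-color nodes the points for the other source agree, so the stored
symbols leave `P_k` with double roots at the two endpoints' points `θ_k`; these differ, since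
otherwise the endpoints would be joined by a residing path avoiding 1-color nodes. Across the
other edges one uses that the points `ψ i` are distinct and that each twist `cᵢ` avoids at most
`|E|` bad values. Such points and twists exist by counting: at most `2|E|` nodes carry an edge.
-/

theorem Set.exists_injOn_forall_notMem {α β : Type*} [Fintype β] [Nonempty β]
    {s : Set α} (hs : s.Finite) (B : α → Finset β)
    (h : ∀ i ∈ s, s.ncard + (B i).card ≤ Fintype.card β) :
    ∃ f : α → β, Set.InjOn f s ∧ ∀ i ∈ s, f i ∉ B i := by
  classical
  have := hs.fintype
  obtain ⟨f, hf, hfB⟩ := (Finset.all_card_le_biUnion_card_iff_exists_injective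
      fun i : s => (B i)ᶜ).mp fun u => by
    rcases u.eq_empty_or_nonempty with rfl | ⟨i, hi⟩
    · simp
    · calc u.card ≤ s.ncard := by
            rw [← Nat.card_coe_set_eq, Nat.card_eq_fintype_card]; exact u.card_le_univ
        _ ≤ (B i)ᶜ.card := by rw [Finset.card_compl]; have := h i i.2; omega
        _ ≤ (u.biUnion fun i : s => (B i)ᶜ).card :=
          Finset.card_le_card (Finset.subset_biUnion_of_mem (fun i : s => (B i)ᶜ) hi)
  refine ⟨fun a => if ha : a ∈ s then f ⟨a, ha⟩ else Classical.arbitrary β, ?_, ?_⟩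
  · intro a ha b hb hab
    simp only [dif_pos ha, dif_pos hb] at hab
    exact congrArg Subtype.val (hf hab)
  · intro a ha
    simpa [dif_pos ha] using hfB ⟨a, ha⟩

theorem isStorageCode_of_ker {N K : ℕ} (G : LabeledGraph N K) {S T : Type} {Φ : Type*}
    [AddGroup S] [AddGroup T] [FunLike Φ (Fin K → S) T] [AddMonoidHomClass Φ (Fin K → S) T]
    (V : Fin N → Φ)
    (hV : ∀ i j k, G.t i j = some k → ∀ x, V i x = 0 → V j x = 0 → x k = 0) :
    IsStorageCode G S T fun i => V i := by
  classical
  intro i j k hij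
  refine ⟨fun z z' => if h : ∃ w, V i w = z ∧ V j w = z' then h.choose k else 0, fun w => ?_⟩
  have hw : ∃ w', V i w' = V i w ∧ V j w' = V j w := ⟨w, rfl, rfl⟩
  obtain ⟨hi, hj⟩ := hw.choose_spec
  simp only [dif_pos hw]
  refine sub_eq_zero.mp (hV i j k hij (hw.choose - w) ?_ ?_)
  · rw [map_sub, hi, sub_self]
  · rw [map_sub, hj, sub_self]

section Cubic

variable {F : Type*} [Field F]

/- `x : Fin 4 → F` stands for the cubic `x 0 + x 1 X + x 2 X² + x 3 X³`; the three maps below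
evaluate it and its first two derivatives at `t`. -/

@[simps]
def cubicEval (t : F) : (Fin 4 → F) →ₗ[F] F where
  toFun x := x 0 + t * x 1 + t ^ 2 * x 2 + t ^ 3 * x 3
  map_add' x y := by simp only [Pi.add_apply]; ring
  map_smul' a x := by simp only [Pi.smul_apply, smul_eq_mul, RingHom.id_apply]; ring

@[simps]
def cubicDeriv (t : F) : (Fin 4 → F) →ₗ[F] F where
  toFun x := x 1 + 2 * t * x 2 + 3 * t ^ 2 * x 3
  map_add' x y := by simp only [Pi.add_apply]; ring
  map_smul' a x := by simp only [Pi.smul_apply, smul_eq_mul, RingHom.id_apply]; ring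

@[simps]
def cubicDeriv2 (t : F) : (Fin 4 → F) →ₗ[F] F where
  toFun x := 2 * x 2 + 6 * t * x 3
  map_add' x y := by simp only [Pi.add_apply]; ring
  map_smul' a x := by simp only [Pi.smul_apply, smul_eq_mul, RingHom.id_apply]; ring

theorem cubic_eq_zero_of_double_roots {s t : F} (hst : s ≠ t) {x : Fin 4 → F}
    (hs : cubicEval s x = 0) (hs' : cubicDeriv s x = 0)
    (ht : cubicEval t x = 0) (ht' : cubicDeriv t x = 0) : x = 0 := by
  simp only [cubicEval_apply, cubicDeriv_apply] at hs hs' ht ht'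
  have hd : s - t ≠ 0 := sub_ne_zero.mpr hst
  have e1 : x 1 + (s + t) * x 2 + (s ^ 2 + s * t + t ^ 2) * x 3 = 0 := by
    apply mul_left_cancel₀ hd; linear_combination hs - ht
  have e2 : x 2 + (2 * s + t) * x 3 = 0 := by
    apply mul_left_cancel₀ hd; linear_combination hs' - e1
  have e3 : 2 * x 2 + 3 * (s + t) * x 3 = 0 := by
    apply mul_left_cancel₀ hd; linear_combination hs' - ht'
  have h3 : x 3 = 0 := by
    apply mul_left_cancel₀ (neg_ne_zero.mpr hd); linear_combination e3 - 2 * e2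
  have h2 : x 2 = 0 := by linear_combination e2 - (2 * s + t) * h3
  have h1 : x 1 = 0 := by linear_combination e1 - (s + t) * h2 - (s ^ 2 + s * t + t ^ 2) * h3
  have h0 : x 0 = 0 := by linear_combination hs - s * h1 - s ^ 2 * h2 - s ^ 3 * h3
  ext i; fin_cases i <;> assumption

/-- A triple root at `s` makes the cubic a multiple of `(X - s)³`. -/
theorem cubic_eq_smul_of_triple_root (h2 : (2 : F) ≠ 0) {s : F} {x : Fin 4 → F}
    (h : cubicEval s x = 0) (h' : cubicDeriv s x = 0) (h'' : cubicDeriv2 s x = 0) :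
    x = x 3 • ![-s ^ 3, 3 * s ^ 2, -(3 * s), 1] := by
  simp only [cubicEval_apply, cubicDeriv_apply, cubicDeriv2_apply] at h h' h''
  have e2 : x 2 = -(3 * s) * x 3 := by apply mul_left_cancel₀ h2; linear_combination h''
  have e1 : x 1 = 3 * s ^ 2 * x 3 := by linear_combination h' - 2 * s * e2
  have e0 : x 0 = -s ^ 3 * x 3 := by linear_combination h - s * e1 - s ^ 2 * e2
  ext i; fin_cases i <;> simp [e0, e1, e2, mul_comm]

theorem cubic_eq_zero_of_triple_roots (h2 : (2 : F) ≠ 0) (h3 : (3 : F) ≠ 0) {s t : F}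
    (hst : s ≠ t) {x : Fin 4 → F}
    (hs : cubicEval s x = 0) (hs' : cubicDeriv s x = 0) (hs'' : cubicDeriv2 s x = 0)
    (ht : cubicEval t x = 0) (ht' : cubicDeriv t x = 0) (ht'' : cubicDeriv2 t x = 0) :
    x = 0 := by
  have es := congrFun (cubic_eq_smul_of_triple_root h2 hs hs' hs'') 2
  have et := congrFun (cubic_eq_smul_of_triple_root h2 ht ht' ht'') 2
  simp only [Pi.smul_apply, smul_eq_mul, Matrix.cons_val] at es et
  have hx3 : x 3 = 0 := by
    have : (3 * (t - s)) * x 3 = 0 := by linear_combination et - es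
    exact (mul_eq_zero.mp this).resolve_left (mul_ne_zero h3 (sub_ne_zero.mpr hst.symm))
  rw [cubic_eq_smul_of_triple_root h2 hs hs' hs'', hx3, zero_smul]

/-- `P(t) + c P'(t)` vanishes on `(X - s)³` only where `(t - s)² (t - s + 3c)` does. -/
theorem cubic_eq_zero_of_triple_root_of_twisted_root (h2 : (2 : F) ≠ 0) {s t c : F}
    (hst : t ≠ s) (hc : t - s + 3 * c ≠ 0) {x : Fin 4 → F}
    (hs : cubicEval s x = 0) (hs' : cubicDeriv s x = 0) (hs'' : cubicDeriv2 s x = 0)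
    (ht : cubicEval t x + c * cubicDeriv t x = 0) : x = 0 := by
  have hx := cubic_eq_smul_of_triple_root h2 hs hs' hs''
  rw [hx] at ht
  simp only [cubicEval_apply, cubicDeriv_apply, Pi.smul_apply, smul_eq_mul, Matrix.cons_val]
    at ht
  have key : ((t - s) ^ 2 * (t - s + 3 * c)) * x 3 = 0 := by linear_combination ht
  have hx3 : x 3 = 0 :=
    (mul_eq_zero.mp key).resolve_left (mul_ne_zero (pow_ne_zero _ (sub_ne_zero.mpr hst)) hc)
  rw [hx, hx3, zero_smul]

theorem cubic_eq_zero_of_twisted_roots {t t' u c c' : F} (ht : t ≠ t') (hc : c ≠ c')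
    {x y : Fin 4 → F}
    (hx : cubicEval t x + c * cubicDeriv t x = 0) (hy : cubicEval u y + c * cubicDeriv u y = 0)
    (hxy : cubicDeriv t x + cubicDeriv u y = 0)
    (hx' : cubicEval t' x + c' * cubicDeriv t' x = 0)
    (hy' : cubicEval u y + c' * cubicDeriv u y = 0)
    (hxy' : cubicDeriv t' x + cubicDeriv u y = 0) : x = 0 := by
  have hu : cubicDeriv u y = 0 := by
    have : (c - c') * cubicDeriv u y = 0 := by linear_combination hy - hy'
    exact (mul_eq_zero.mp this).resolve_left (sub_ne_zero.mpr hc)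
  have htd : cubicDeriv t x = 0 := by linear_combination hxy - hu
  have htd' : cubicDeriv t' x = 0 := by linear_combination hxy' - hu
  exact cubic_eq_zero_of_double_roots ht (by linear_combination hx - c * htd) htd
    (by linear_combination hx' - c' * htd') htd'

end Cubic

section Codes

variable {F : Type*} [Field F]

def twoColorCode (θ : Fin 2 → F) (c : F) : (Fin 2 → Fin 4 → F) →ₗ[F] (Fin 3 → F) :=
  LinearMap.pi ![(cubicEval (θ 0) + c • cubicDeriv (θ 0)) ∘ₗ LinearMap.proj 0,
    (cubicEval (θ 1) + c • cubicDeriv (θ 1)) ∘ₗ LinearMap.proj 1,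
    cubicDeriv (θ 0) ∘ₗ LinearMap.proj 0 + cubicDeriv (θ 1) ∘ₗ LinearMap.proj 1]

def oneColorCode (k : Fin 2) (s : F) : (Fin 2 → Fin 4 → F) →ₗ[F] (Fin 3 → F) :=
  LinearMap.pi ![cubicEval s, cubicDeriv s, cubicDeriv2 s] ∘ₗ LinearMap.proj k

theorem twoColorCode_eq_zero_iff {θ : Fin 2 → F} {c : F} {x : Fin 2 → Fin 4 → F} :
    twoColorCode θ c x = 0 ↔ ∀ k, cubicEval (θ k) (x k) + c * cubicDeriv (θ k) (x k) = 0 ∧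
      cubicDeriv (θ k) (x k) + cubicDeriv (θ (k + 1)) (x (k + 1)) = 0 := by
  simp only [twoColorCode, funext_iff, LinearMap.pi_apply, Pi.zero_apply, Fin.forall_fin_succ,
    Matrix.cons_val_zero, LinearMap.coe_comp, LinearMap.coe_proj, Function.comp_apply,
    Function.eval, LinearMap.add_apply, LinearMap.smul_apply, smul_eq_mul, Matrix.cons_val_succ,
    Matrix.cons_val_fin_one, forall_const, zero_add, Fin.succ_zero_eq_one, Fin.reduceAdd,
    IsEmpty.forall_iff, and_true]
  rw [add_comm (cubicDeriv (θ 1) (x 1))]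
  tauto

theorem oneColorCode_eq_zero_iff {k : Fin 2} {s : F} {x : Fin 2 → Fin 4 → F} :
    oneColorCode k s x = 0 ↔
      cubicEval s (x k) = 0 ∧ cubicDeriv s (x k) = 0 ∧ cubicDeriv2 s (x k) = 0 := by
  simp [oneColorCode, funext_iff, Fin.forall_fin_succ]

end Codes

namespace LabeledGraph

section Graph

variable {N K : ℕ} (G : LabeledGraph N K)

theorem edgeCount_pos {i j : Fin N} {k : Fin K} (h : G.t i j = some k) : 0 < edgeCount G :=
  (Set.ncard_pos (Set.toFinite _)).mpr ⟨s(i, j), i, j, rfl, by simp [h]⟩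

def toSimpleGraph : SimpleGraph (Fin N) where
  Adj a b := G.t a b ≠ none
  symm := ⟨fun a b h => G.symm a b ▸ h⟩
  loopless := ⟨fun a h => h (G.irrefl a)⟩

theorem edgeCount_eq_ncard_edgeSet : edgeCount G = G.toSimpleGraph.edgeSet.ncard := by
  rw [edgeCount]
  congr 1
  ext e
  induction e using Sym2.ind with
  | _ u v =>
    refine ⟨fun ⟨i, j, hij, h⟩ => ?_, fun h => ⟨u, v, rfl, h⟩⟩
    rcases Sym2.eq_iff.mp hij with ⟨rfl, rfl⟩ | ⟨rfl, rfl⟩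
    · exact h
    · exact (G.toSimpleGraph.adj_symm h : _)

theorem ncard_colorSet_nonempty_le : {i | (colorSet G i).Nonempty}.ncard ≤ 2 * edgeCount G := by
  classical
  calc {i | (colorSet G i).Nonempty}.ncard
      ≤ (Set.range fun d : G.toSimpleGraph.Dart => d.fst).ncard := by
        refine Set.ncard_le_ncard ?_ (Set.toFinite _)
        rintro i ⟨k, j, hij⟩
        exact ⟨⟨(i, j), by simp [toSimpleGraph, hij]⟩, rfl⟩
    _ ≤ Fintype.card G.toSimpleGraph.Dart := by
        rw [← Set.image_univ, ← Nat.card_eq_fintype_card, ← Set.ncard_univ]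
        exact Set.ncard_image_le
    _ = 2 * edgeCount G := by
        rw [SimpleGraph.dart_card_eq_twice_card_edges, edgeCount_eq_ncard_edgeSet,
          ← SimpleGraph.coe_edgeFinset, Set.ncard_coe_finset]

theorem ncard_incident_le (a : Fin N) :
    {bk : Fin N × Fin K | G.t a bk.1 = some bk.2}.ncard ≤ edgeCount G := by
  refine Set.ncard_le_ncard_of_injOn (fun bk => s(a, bk.1)) ?_ ?_ (Set.toFinite _)
  · rintro ⟨b, k⟩ (h : G.t a b = some k)
    exact ⟨a, b, rfl, by simp [h]⟩
  · rintro ⟨b, k⟩ (h : G.t a b = some k) ⟨b', k'⟩ (h' : G.t a b' = some k') hbb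
    obtain rfl : b = b' := Sym2.congr_right.mp hbb
    simp_all

def ResidingPathsMeetOneColor : Prop :=
  ∀ i j k, G.t i j = some k → ∀ k', k' ≠ k →
    ∀ P (v : Fin (P + 1) → Fin N), IsPath G k' P v →
      v 0 = i → v (Fin.last P) = j → ∃ q : Fin (P + 1), IsMColor G (v q) 1

def sameColorGraph (k : Fin K) : SimpleGraph (Fin N) where
  Adj a b := G.t a b = some k ∧ colorSet G a = Set.univ ∧ colorSet G b = Set.univ
  symm := ⟨fun a b h => ⟨G.symm a b ▸ h.1, h.2.2, h.2.1⟩⟩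
  loopless := ⟨fun _ h => G.ne_of_t_eq_some h.1 rfl⟩

variable {G}

theorem colorSet_eq_univ_of_reachable {k : Fin K} {a b : Fin N}
    (hab : (G.sameColorGraph k).Reachable a b) (ha : colorSet G a = Set.univ) :
    colorSet G b = Set.univ := by
  induction (SimpleGraph.reachable_iff_reflTransGen a b).mp hab with
  | refl => exact ha
  | tail _ hadj _ => exact hadj.2.2

theorem colorSet_getVert_eq_univ {k : Fin K} {a b : Fin N} (w : (G.sameColorGraph k).Walk a b)
    (hlen : 1 ≤ w.length) {q : ℕ} (hq : q ≤ w.length) : colorSet G (w.getVert q) = Set.univ := by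
  rcases hq.lt_or_eq with hq | rfl
  · exact (w.adj_getVert_succ hq).2.1
  · simpa [Nat.sub_add_cancel hlen] using (w.adj_getVert_succ (i := w.length - 1) (by omega)).2.2

theorem isPath_of_isTrail {k : Fin K} {a b : Fin N} {w : (G.sameColorGraph k).Walk a b}
    (hw : w.IsTrail) (hlen : 1 ≤ w.length) :
    IsPath G k w.length fun q => w.getVert q := by
  refine ⟨hlen, fun q => (w.adj_getVert_succ q.isLt).1, fun q r hqr => ?_⟩
  have hq : q.val < w.edges.length := by simp
  have hr : r.val < w.edges.length := by simp
  simp only [Fin.val_castSucc, Fin.val_succ] at hqr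
  rw [← SimpleGraph.Walk.getElem_edges hq, ← SimpleGraph.Walk.getElem_edges hr] at hqr
  exact Fin.ext ((hw.edges_nodup.getElem_inj_iff).mp hqr)

theorem not_reachable_of_t_eq_some (hres : G.ResidingPathsMeetOneColor) {i j : Fin N}
    {k k' : Fin K} (hij : G.t i j = some k) (hk : k' ≠ k) :
    ¬ (G.sameColorGraph k').Reachable i j := by
  rintro ⟨w⟩
  have hw := w.bypass_isPath
  have hlen : 1 ≤ w.bypass.length := Nat.one_le_iff_ne_zero.mpr fun h =>
    G.ne_of_t_eq_some hij (SimpleGraph.Walk.eq_of_length_eq_zero h)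
  obtain ⟨q, hq⟩ :=
    hres i j k hij k' hk _ _ (isPath_of_isTrail hw.isTrail hlen) (by simp) (by simp)
  have huniv := colorSet_getVert_eq_univ _ hlen (Nat.le_of_lt_succ q.isLt)
  have hK : 1 < K := by omega
  rw [IsMColor, huniv, Set.ncard_univ, Nat.card_eq_fintype_card, Fintype.card_fin] at hq
  omega

section Components

variable {F : Type*}

noncomputable def componentPoint (G : LabeledGraph N K) (ψ : Fin N → F) (k : Fin K) (i : Fin N) :
    F :=
  ψ ((G.sameColorGraph k).connectedComponentMk i).out

theorem componentPoint_eq_of_adj (ψ : Fin N → F) {k : Fin K} {a b : Fin N}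
    (h : (G.sameColorGraph k).Adj a b) : G.componentPoint ψ k a = G.componentPoint ψ k b := by
  rw [componentPoint, componentPoint,
    SimpleGraph.ConnectedComponent.connectedComponentMk_eq_of_adj h]

theorem colorSet_out_eq_univ {k : Fin K} {i : Fin N} (hi : colorSet G i = Set.univ) :
    colorSet G ((G.sameColorGraph k).connectedComponentMk i).out = Set.univ :=
  colorSet_eq_univ_of_reachable (SimpleGraph.ConnectedComponent.exact (Quot.out_eq _)).symm hi

theorem componentPoint_ne (hres : G.ResidingPathsMeetOneColor) {ψ : Fin N → F}
    (hψ : Set.InjOn ψ {i | (colorSet G i).Nonempty}) {a b : Fin N} {k k' : Fin K}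
    (hab : G.t a b = some k) (hk : k' ≠ k) (ha : colorSet G a = Set.univ)
    (hb : colorSet G b = Set.univ) : G.componentPoint ψ k' a ≠ G.componentPoint ψ k' b := by
  intro h
  have hout := hψ ⟨k, by rw [colorSet_out_eq_univ ha]; trivial⟩
    ⟨k, by rw [colorSet_out_eq_univ hb]; trivial⟩ h
  refine not_reachable_of_t_eq_some hres hab hk (SimpleGraph.ConnectedComponent.exact ?_)
  rw [← Quot.out_eq ((G.sameColorGraph k').connectedComponentMk a), hout]
  exact Quot.out_eq _

theorem componentPoint_ne_apply {ψ : Fin N → F} (hψ : Set.InjOn ψ {i | (colorSet G i).Nonempty})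
    {a b : Fin N} {k k' : Fin K} (hab : G.t a b = some k) (ha : colorSet G a = Set.univ)
    (hb : colorSet G b ≠ Set.univ) : G.componentPoint ψ k' a ≠ ψ b := by
  intro h
  have hout := hψ ⟨k, by rw [colorSet_out_eq_univ ha]; trivial⟩ ⟨k, a, (G.symm b a).trans hab⟩ h
  exact hb (hout ▸ colorSet_out_eq_univ ha)

end Components

end Graph

section Code

variable {N : ℕ} {F : Type} [Field F]

/- Source `k` of a 2-color node is read at the point of its component for the other color
`k + 1`; a node without edges gets an arbitrary one-color code. -/
open Classical in
noncomputable def fourThirdsCode (G : LabeledGraph N 2) (ψ c : Fin N → F) (i : Fin N) :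
    (Fin 2 → Fin 4 → F) →ₗ[F] (Fin 3 → F) :=
  if colorSet G i = Set.univ then twoColorCode (fun k => G.componentPoint ψ (k + 1) i) (c i)
  else oneColorCode (if 0 ∈ colorSet G i then 0 else 1) (ψ i)

variable {G : LabeledGraph N 2} {ψ c : Fin N → F}

theorem fourThirdsCode_of_eq_univ {i : Fin N} (h : colorSet G i = Set.univ) :
    G.fourThirdsCode ψ c i = twoColorCode (fun k => G.componentPoint ψ (k + 1) i) (c i) :=
  if_pos h

theorem fourThirdsCode_of_ne_univ {a b : Fin N} {k : Fin 2} (hab : G.t a b = some k)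
    (h : colorSet G a ≠ Set.univ) : G.fourThirdsCode ψ c a = oneColorCode k (ψ a) := by
  have hk : k ∈ colorSet G a := ⟨b, hab⟩
  rw [fourThirdsCode, if_neg h]
  congr
  fin_cases k
  · exact if_pos hk
  · refine if_neg fun h0 => h (Set.eq_univ_of_forall fun k' => ?_)
    fin_cases k' <;> assumption

theorem fourThirdsCode_ker_of_eq_univ_of_eq_univ (hres : G.ResidingPathsMeetOneColor)
    (hψ : Set.InjOn ψ {i | (colorSet G i).Nonempty})
    (hc : Set.InjOn c {i | colorSet G i = Set.univ}) {a b : Fin N} {k : Fin 2}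
    (hab : G.t a b = some k) (ha : colorSet G a = Set.univ) (hb : colorSet G b = Set.univ)
    {x : Fin 2 → Fin 4 → F} (hxa : G.fourThirdsCode ψ c a x = 0)
    (hxb : G.fourThirdsCode ψ c b x = 0) : x k = 0 := by
  rw [fourThirdsCode_of_eq_univ ha, twoColorCode_eq_zero_iff] at hxa
  rw [fourThirdsCode_of_eq_univ hb, twoColorCode_eq_zero_iff] at hxb
  have hfar := componentPoint_ne hres hψ hab ((by decide : ∀ k : Fin 2, k + 1 ≠ k) k) ha hb
  have hnear : G.componentPoint ψ k a = G.componentPoint ψ k b :=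
    componentPoint_eq_of_adj ψ ⟨hab, ha, hb⟩
  have hca : c a ≠ c b := fun h => G.ne_of_t_eq_some hab (hc ha hb h)
  obtain ⟨hxa0, hxa1⟩ := hxa k
  obtain ⟨hxb0, hxb1⟩ := hxb k
  have hxa2 := (hxa (k + 1)).1
  have hxb2 := (hxb (k + 1)).1
  have hk : k + 1 + 1 = k := (by decide : ∀ k : Fin 2, k + 1 + 1 = k) k
  simp only [hk] at hxa1 hxb1 hxa2 hxb2
  rw [← hnear] at hxb1 hxb2
  exact cubic_eq_zero_of_twisted_roots hfar hca hxa0 hxa2 hxa1 hxb0 hxb2 hxb1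

theorem fourThirdsCode_ker_of_eq_univ_of_ne_univ (h2 : (2 : F) ≠ 0)
    (hψ : Set.InjOn ψ {i | (colorSet G i).Nonempty})
    (hct : ∀ a b k, G.t a b = some k → colorSet G a = Set.univ →
      G.componentPoint ψ (k + 1) a - ψ b + 3 * c a ≠ 0)
    {a b : Fin N} {k : Fin 2} (hab : G.t a b = some k) (ha : colorSet G a = Set.univ)
    (hb : colorSet G b ≠ Set.univ) {x : Fin 2 → Fin 4 → F} (hxa : G.fourThirdsCode ψ c a x = 0)
    (hxb : G.fourThirdsCode ψ c b x = 0) : x k = 0 := by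
  rw [fourThirdsCode_of_eq_univ ha, twoColorCode_eq_zero_iff] at hxa
  rw [fourThirdsCode_of_ne_univ ((G.symm b a).trans hab) hb, oneColorCode_eq_zero_iff] at hxb
  obtain ⟨hs, hs', hs''⟩ := hxb
  exact cubic_eq_zero_of_triple_root_of_twisted_root h2 (componentPoint_ne_apply hψ hab ha hb)
    (hct a b k hab ha) hs hs' hs'' (hxa k).1

theorem fourThirdsCode_ker_of_ne_univ_of_ne_univ (h2 : (2 : F) ≠ 0) (h3 : (3 : F) ≠ 0)
    (hψ : Set.InjOn ψ {i | (colorSet G i).Nonempty}) {a b : Fin N} {k : Fin 2}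
    (hab : G.t a b = some k) (ha : colorSet G a ≠ Set.univ) (hb : colorSet G b ≠ Set.univ)
    {x : Fin 2 → Fin 4 → F} (hxa : G.fourThirdsCode ψ c a x = 0)
    (hxb : G.fourThirdsCode ψ c b x = 0) : x k = 0 := by
  have hba := (G.symm b a).trans hab
  rw [fourThirdsCode_of_ne_univ hab ha, oneColorCode_eq_zero_iff] at hxa
  rw [fourThirdsCode_of_ne_univ hba hb, oneColorCode_eq_zero_iff] at hxb
  have hψab : ψ a ≠ ψ b := fun h => G.ne_of_t_eq_some hab (hψ ⟨k, b, hab⟩ ⟨k, a, hba⟩ h)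
  exact cubic_eq_zero_of_triple_roots h2 h3 hψab hxa.1 hxa.2.1 hxa.2.2 hxb.1 hxb.2.1 hxb.2.2

theorem isStorageCode_fourThirdsCode (h2 : (2 : F) ≠ 0) (h3 : (3 : F) ≠ 0)
    (hres : G.ResidingPathsMeetOneColor) (hψ : Set.InjOn ψ {i | (colorSet G i).Nonempty})
    (hc : Set.InjOn c {i | colorSet G i = Set.univ})
    (hct : ∀ a b k, G.t a b = some k → colorSet G a = Set.univ →
      G.componentPoint ψ (k + 1) a - ψ b + 3 * c a ≠ 0) :
    IsStorageCode G (Fin 4 → F) (Fin 3 → F) fun i => G.fourThirdsCode ψ c i := by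
  refine isStorageCode_of_ker G _ fun a b k hab x hxa hxb => ?_
  by_cases ha : colorSet G a = Set.univ <;> by_cases hb : colorSet G b = Set.univ
  · exact fourThirdsCode_ker_of_eq_univ_of_eq_univ hres hψ hc hab ha hb hxa hxb
  · exact fourThirdsCode_ker_of_eq_univ_of_ne_univ h2 hψ hct hab ha hb hxa hxb
  · exact fourThirdsCode_ker_of_eq_univ_of_ne_univ h2 hψ hct ((G.symm b a).trans hab) hb ha
      hxb hxa
  · exact fourThirdsCode_ker_of_ne_univ_of_ne_univ h2 h3 hψ hab ha hb hxa hxb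

end Code

theorem exists_fourThirdsCode_params {N : ℕ} {F : Type*} [Field F] [Fintype F]
    (G : LabeledGraph N 2) (h3 : (3 : F) ≠ 0) (hF : 3 * edgeCount G ≤ Fintype.card F) :
    ∃ ψ c : Fin N → F, Set.InjOn ψ {i | (colorSet G i).Nonempty} ∧
      Set.InjOn c {i | colorSet G i = Set.univ} ∧
      ∀ a b k, G.t a b = some k → colorSet G a = Set.univ →
        G.componentPoint ψ (k + 1) a - ψ b + 3 * c a ≠ 0 := by
  classical
  have hV := G.ncard_colorSet_nonempty_le
  have hU : {i | colorSet G i = Set.univ}.ncard ≤ 2 * edgeCount G :=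
    (Set.ncard_le_ncard fun i (hi : colorSet G i = Set.univ) =>
      show (colorSet G i).Nonempty from hi ▸ Set.univ_nonempty).trans hV
  obtain ⟨ψ, hψ, -⟩ := Set.exists_injOn_forall_notMem
    (Set.toFinite {i | (colorSet G i).Nonempty}) (fun _ => (∅ : Finset F)) fun _ _ => by
      rw [Finset.card_empty]; omega
  let bad (a : Fin N) : Finset F :=
    (Set.toFinite {bk : Fin N × Fin 2 | G.t a bk.1 = some bk.2}).toFinset.image
      fun bk => (ψ bk.1 - G.componentPoint ψ (bk.2 + 1) a) / 3
  obtain ⟨c, hc, hcbad⟩ := Set.exists_injOn_forall_notMem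
      (Set.toFinite {i | colorSet G i = Set.univ}) bad fun a _ => by
    have : (bad a).card ≤ edgeCount G := Finset.card_image_le.trans
      ((Set.ncard_eq_toFinset_card _ _).symm.trans_le (G.ncard_incident_le a))
    omega
  refine ⟨ψ, c, hψ, hc, fun a b k hab ha hzero => hcbad a ha ?_⟩
  refine Finset.mem_image.mpr ⟨(b, k), by simpa using hab, ?_⟩
  rw [div_eq_iff h3]
  linear_combination -hzero

end LabeledGraph

/-- with `K = 2` sources, if every residing path of every internal edge
contains a `1`-color node (vacuously true when no internal edge exists), then for every
prime `p > 4|E|` there is a storage code with `S = (Fin 4 → ZMod p)`,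
`T = (Fin 3 → ZMod p)`, i.e. rate `4/3` is achievable. -/
theorem rate_four_thirds_achievable {N : ℕ} (G : LabeledGraph N 2)
    (hres : ∀ i j k, G.t i j = some k → ∀ k', k' ≠ k →
      ∀ P (v : Fin (P + 1) → Fin N), IsPath G k' P v →
        v 0 = i → v (Fin.last P) = j → ∃ q : Fin (P + 1), IsMColor G (v q) 1)
    (p : ℕ) (hp : p.Prime) (hpE : 4 * edgeCount G < p) :
    ∃ V : Fin N → (Fin 2 → (Fin 4 → ZMod p)) → (Fin 3 → ZMod p),
      IsStorageCode G (Fin 4 → ZMod p) (Fin 3 → ZMod p) V := by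
  have : Fact p.Prime := ⟨hp⟩
  by_cases hE : edgeCount G = 0
  · exact ⟨0, fun i j k hij => absurd hE (G.edgeCount_pos hij).ne'⟩
  have hcast (n : ℕ) (hn : 0 < n) (hnp : n < p) : (n : ZMod p) ≠ 0 := by
    rw [Ne, ZMod.natCast_eq_zero_iff]
    exact Nat.not_dvd_of_pos_of_lt hn hnp
  have h2 : (2 : ZMod p) ≠ 0 := by exact_mod_cast hcast 2 two_pos (by omega)
  have h3 : (3 : ZMod p) ≠ 0 := by exact_mod_cast hcast 3 three_pos (by omega)
  obtain ⟨ψ, c, hψ, hc, hct⟩ := G.exists_fourThirdsCode_params h3 (by rw [ZMod.card]; omega)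
  exact ⟨_, G.isStorageCode_fourThirdsCode h2 h3 hres hψ hc hct⟩
end

section
/- If some node i of a labeled graph is M-color with M ≥ 4 (the set of labels carried by edges incident to i has at least 4 elements), then every storage code over the graph satisfies |S|⁴ ≤ |T|⁵; i.e., the symbol rate is at most 5/4, hence strictly below 4/3 whenever |S| ≥ 2. -/
/-- a node carrying at least `4` distinct labels forces `|S|⁴ ≤ |T|⁵`,
i.e. symbol rate at most `5/4`. -/
theorem rate_le_of_four_colors {N K : ℕ} (G : LabeledGraph N K) (S T : Type)
    [Fintype S] [Fintype T] (V : Fin N → (Fin K → S) → T)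
    (hV : IsStorageCode G S T V)
    (i : Fin N) (hM : 4 ≤ (colorSet G i).ncard) :
    Fintype.card S ^ 4 ≤ Fintype.card T ^ 5 := by
  rcases isEmpty_or_nonempty S with hS | hS
  · simp [Fintype.card_eq_zero]
  obtain ⟨w0⟩ : Nonempty (Fin K → S) := ⟨fun _ => Classical.arbitrary S⟩
  classical
  have hcard : Fintype.card (Fin 4) ≤ Fintype.card (colorSet G i) := by
    rw [Fintype.card_fin]
    rwa [Set.ncard_eq_toFinset_card', Set.toFinset_card] at hM
  obtain ⟨e⟩ := Function.Embedding.nonempty_of_card_le hcard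
  -- colors and neighbors
  have hmem : ∀ a : Fin 4, ∃ j, G.t i j = some ((e a : Fin K)) := fun a => (e a).2
  choose j hj using hmem
  choose D hD using fun a => hV i (j a) (e a) (hj a)
  -- injectivity of the evaluation map
  have einj : Function.Injective (fun a : Fin 4 => (e a : Fin K)) :=
    Subtype.val_injective.comp e.injective
  set w : (Fin 4 → S) → (Fin K → S) :=
    fun s => Function.extend (fun a => (e a : Fin K)) s w0 with hw
  have hws : ∀ s a, w s ((e a : Fin K)) = s a := by
    intro s a
    simp [hw, einj.extend_apply]
  have key : Function.Injective (fun s : Fin 4 → S => (V i (w s), fun a => V (j a) (w s))) := by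
    intro s1 s2 h
    have h1 : V i (w s1) = V i (w s2) := congrArg Prod.fst h
    have h2 : ∀ a, V (j a) (w s1) = V (j a) (w s2) := fun a =>
      congrFun (congrArg Prod.snd h) a
    funext a
    have := hD a (w s1)
    rw [h1, h2 a, hD a (w s2)] at this
    rw [hws, hws] at this
    exact this.symm
  have := Fintype.card_le_of_injective _ key
  simpa [Fintype.card_fun, pow_succ, mul_comm] using this
end

section
/- If a labeled graph contains a 3-color node i joined by an edge to a node j whose incident edges carry at least 2 distinct labels (j is M-color with M ≥ 2), then every storage code over the graph satisfies |S|⁴ ≤ |T|⁵; i.e., the symbol rate is at most 5/4, hence strictly below 4/3 whenever |S| ≥ 2. -/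
/-! Let `i` carry the colors `k` (edge `ij`), `b` (edge `im`), `c` (edge `in`), and let `j` carry
a color `d ≠ k` (edge `jl`). If `d ∉ {b, c}`, the four sources `k, b, c, d` are all decodable from
the five symbols stored at `i, j, m, n, l`, so `|S|⁴ ≤ |T|⁵` by counting. If `d = b`, only three
sources are decodable, but `W_b` is decodable twice, from `(i, m)` and from `(j, l)`. Fixing
`W_b = s` confines `V_i` and `V_j` to the sets `X_s`, `Y_s` of symbols from which the respective
decoders can output `s`, so `|S|² ≤ |X_s| |Y_s| |T|`; as `∑ₛ |X_s|, ∑ₛ |Y_s| ≤ |T|²`, AM–GM at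
the `s` minimising `|X_s| + |Y_s|` gives the same bound `|S|⁴ ≤ |T|⁵`. -/

open Finset Fintype

theorem Set.exists_ne_ne_of_ncard_eq_three {α : Type*} {s : Set α} (hs : s.ncard = 3) {a : α}
    (ha : a ∈ s) : ∃ b ∈ s, ∃ c ∈ s, a ≠ b ∧ a ≠ c ∧ b ≠ c := by
  have : (s \ {a}).ncard = 2 := by rw [Set.ncard_sdiff_singleton_of_mem ha, hs]
  obtain ⟨b, c, hbc, hs'⟩ := Set.ncard_eq_two.mp this
  have hb : b ∈ s \ {a} := hs' ▸ Set.mem_insert b {c}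
  have hc : c ∈ s \ {a} := hs' ▸ Set.mem_insert_of_mem b rfl
  exact ⟨b, hb.1, c, hc.1, Ne.symm hb.2, Ne.symm hc.2, hbc⟩

theorem sum_card_filter_exists_apply_eq_le {α β γ : Type*} [Fintype α] [Fintype β] [Fintype γ]
    [DecidableEq γ] (D : α → β → γ) :
    ∑ c, #{a | ∃ b, D a b = c} ≤ card α * card β := by
  calc ∑ c, #{a | ∃ b, D a b = c}
      = ∑ a, #{c | ∃ b, D a b = c} :=
        (sum_card_bipartiteAbove_eq_sum_card_bipartiteBelow (fun a c => ∃ b, D a b = c)).symm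
    _ = ∑ a, #(univ.image (D a)) := sum_congr rfl fun a _ => by congr 1; ext c; simp
    _ ≤ ∑ _a : α, card β := sum_le_sum fun a _ => card_image_le
    _ = card α * card β := by simp

theorem pow_four_le_of_sq_le_mul {σ : Type*} [Fintype σ] (x y : σ → ℕ) (τ : ℕ)
    (hxy : ∀ s, card σ ^ 2 ≤ x s * y s * τ) (hx : ∑ s, x s ≤ τ ^ 2) (hy : ∑ s, y s ≤ τ ^ 2) :
    card σ ^ 4 ≤ τ ^ 5 := by
  obtain hσ | hσ := isEmpty_or_nonempty σ
  · simp
  set n := card σ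
  obtain ⟨s₀, -, hs₀⟩ := exists_min_image univ (fun s => x s + y s) univ_nonempty
  have hsum : n * (x s₀ + y s₀) ≤ 2 * τ ^ 2 := by
    calc n * (x s₀ + y s₀) ≤ ∑ s, (x s + y s) := by
          simpa using card_nsmul_le_sum univ (fun s => x s + y s) _ hs₀
      _ ≤ 2 * τ ^ 2 := by rw [sum_add_distrib]; omega
  have h4 : 4 * n ^ 4 ≤ 4 * τ ^ 5 := by
    calc 4 * n ^ 4 = n ^ 2 * (4 * n ^ 2) := by ring
      _ ≤ n ^ 2 * (4 * (x s₀ * y s₀ * τ)) := by gcongr; exact hxy s₀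
      _ = n ^ 2 * (4 * x s₀ * y s₀ * τ) := by ring
      _ ≤ n ^ 2 * ((x s₀ + y s₀) ^ 2 * τ) := by gcongr; exact four_mul_le_sq_add _ _
      _ = (n * (x s₀ + y s₀)) ^ 2 * τ := by ring
      _ ≤ (2 * τ ^ 2) ^ 2 * τ := by gcongr
      _ = 4 * τ ^ 5 := by ring
  omega

section Recovers

variable {ι S T : Type*}

def Recovers (f g : (ι → S) → T) (k : ι) : Prop :=
  ∃ D : T → T → S, ∀ w, D (f w) (g w) = w k

theorem Recovers.apply_eq_of_eq {f g : (ι → S) → T} {k : ι} (h : Recovers f g k)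
    {w w' : ι → S} (hf : f w = f w') (hg : g w = g w') : w k = w' k := by
  obtain ⟨D, hD⟩ := h
  rw [← hD w, ← hD w', hf, hg]

theorem card_pow_le_card_of_determines [Fintype S] {β : Type*}
    (A : Finset ι) (w₀ : ι → S) (F : (ι → S) → β) (B : Finset β)
    (hB : ∀ w, (∀ k ∉ A, w k = w₀ k) → F w ∈ B)
    (hF : ∀ w w', F w = F w' → ∀ k ∈ A, w k = w' k) :
    card S ^ #A ≤ #B := by
  classical
  let extend (x : A → S) : ι → S := fun k => if h : k ∈ A then x ⟨k, h⟩ else w₀ k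
  calc card S ^ #A = #(univ : Finset (A → S)) := by simp
    _ ≤ #B := by
      refine card_le_card_of_injOn (fun x => F (extend x))
        (fun x _ => hB _ fun k hk => by simp [extend, hk]) fun x _ y _ hxy => ?_
      funext ⟨k, hk⟩
      simpa [extend, hk] using hF _ _ hxy k hk

theorem card_pow_le_of_forall_recovers [Fintype S] [Fintype T] [Nonempty S] {m : ℕ}
    (f : Fin m → (ι → S) → T) (A : Finset ι) (hA : ∀ k ∈ A, ∃ p q, Recovers (f p) (f q) k) :
    card S ^ #A ≤ card T ^ m := by
  classical
  have := card_pow_le_card_of_determines A (fun _ => Classical.arbitrary S)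
    (fun w p => f p w) univ (fun _ _ => mem_univ _) fun w w' h k hk => by
      obtain ⟨p, q, hpq⟩ := hA k hk
      exact hpq.apply_eq_of_eq (congrFun h p) (congrFun h q)
  simpa using this

theorem card_pow_four_le_of_recovers_twice [Fintype S] [Fintype T]
    {x y z u v : (ι → S) → T} {a b c : ι} (hab : a ≠ b) (hac : a ≠ c) (hbc : b ≠ c)
    (ha : Recovers x y a) (hb₁ : Recovers x u b) (hb₂ : Recovers y v b) (hc : Recovers x z c) :
    card S ^ 4 ≤ card T ^ 5 := by
  classical
  obtain ⟨D₁, hD₁⟩ := hb₁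
  obtain ⟨D₂, hD₂⟩ := hb₂
  refine pow_four_le_of_sq_le_mul (fun s => #{t | ∃ t', D₁ t t' = s})
    (fun s => #{t | ∃ t', D₂ t t' = s}) _ (fun s => ?_)
    (by simpa [sq] using sum_card_filter_exists_apply_eq_le D₁)
    (by simpa [sq] using sum_card_filter_exists_apply_eq_le D₂)
  have := card_pow_le_card_of_determines {a, c} (fun _ => s) (fun w => (x w, y w, z w))
    (({t | ∃ t', D₁ t t' = s} : Finset T) ×ˢ ({t | ∃ t', D₂ t t' = s} : Finset T) ×ˢ univ)
    (fun w hw => ?_) (fun w w' h k hk => ?_)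
  · simpa [card_pair hac, card_product, mul_assoc] using this
  · have hwb : w b = s := hw b (by simp [hab.symm, hbc])
    simp only [mem_product, mem_filter, mem_univ, true_and, and_true]
    exact ⟨⟨u w, hwb ▸ hD₁ w⟩, ⟨v w, hwb ▸ hD₂ w⟩⟩
  · simp only [Prod.mk.injEq] at h
    obtain rfl | rfl : k = a ∨ k = c := by simpa using hk
    · exact ha.apply_eq_of_eq h.1 h.2.1
    · exact hc.apply_eq_of_eq h.1 h.2.2

end Recovers

/-- a `3`-color node adjacent to a node carrying at least `2` distinct
labels forces `|S|⁴ ≤ |T|⁵`, i.e. symbol rate at most `5/4`. -/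
theorem rate_le_of_three_color_adjacent {N K : ℕ} (G : LabeledGraph N K) (S T : Type)
    [Fintype S] [Fintype T] (V : Fin N → (Fin K → S) → T)
    (hV : IsStorageCode G S T V)
    (i j : Fin N) (hi : IsMColor G i 3) (hij : G.t i j ≠ none)
    (hj : 2 ≤ (colorSet G j).ncard) :
    Fintype.card S ^ 4 ≤ Fintype.card T ^ 5 := by
  classical
  obtain _ | _ := isEmpty_or_nonempty S
  · simp
  obtain ⟨k, hk⟩ := Option.ne_none_iff_exists'.mp hij
  obtain ⟨b, ⟨m, hm⟩, c, ⟨n, hn⟩, hkb, hkc, hbc⟩ :=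
    Set.exists_ne_ne_of_ncard_eq_three hi ⟨j, hk⟩
  obtain ⟨d, ⟨l, hl⟩, hdk⟩ := Set.exists_ne_of_one_lt_ncard hj k
  have hk : Recovers (V i) (V j) k := hV i j k hk
  have hb : Recovers (V i) (V m) b := hV i m b hm
  have hc : Recovers (V i) (V n) c := hV i n c hn
  have hd : Recovers (V j) (V l) d := hV j l d hl
  by_cases hdb : d = b
  · subst hdb
    exact card_pow_four_le_of_recovers_twice hkb hkc hbc hk hb hd hc
  by_cases hdc : d = c
  · subst hdc
    exact card_pow_four_le_of_recovers_twice hkc hkb hbc.symm hk hc hd hb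
  have hcard : #{k, b, c, d} = 4 := by
    rw [card_insert_of_notMem (by simp [hkb, hkc, Ne.symm hdk]),
      card_insert_of_notMem (by simp [hbc, Ne.symm hdb]), card_pair (Ne.symm hdc)]
  simpa [hcard] using card_pow_le_of_forall_recovers ![V i, V j, V m, V n, V l] {k, b, c, d}
    (by simp only [mem_insert, mem_singleton]
        rintro _ (rfl | rfl | rfl | rfl)
        exacts [⟨0, 1, hk⟩, ⟨0, 2, hb⟩, ⟨0, 3, hc⟩, ⟨1, 4, hd⟩])
end

section
/- If a labeled graph contains a normal 2-color node i joined by an edge to a 2-color node j such that the color set of i differs from the color set of j, then every storage code over the graph satisfies |S|⁴ ≤ |T|⁵; i.e., the symbol rate is at most 5/4, hence strictly below 4/3 whenever |S| ≥ 2. -/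
set_option maxHeartbeats 1000000

/-- Numeric Cauchy–Schwarz step. -/
lemma cs_numeric {S : Type} [Fintype S] {m : ℕ} (u v : S → ℕ)
    (h1 : ∀ g : S, Fintype.card S ^ 2 ≤ m * (u g * v g))
    (h2 : ∑ g : S, u g ≤ m ^ 2) (h3 : ∑ g : S, v g ≤ m ^ 2) :
    Fintype.card S ^ 4 ≤ m ^ 5 := by
  set n := Fintype.card S with hn
  have hmR : (0 : ℝ) ≤ (m : ℝ) := Nat.cast_nonneg m
  have hstep : ∀ g : S, (n : ℝ) ≤ Real.sqrt m * Real.sqrt ((u g : ℝ) * (v g : ℝ)) := by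
    intro g
    have ha : ((n : ℝ)) ^ 2 ≤ (m : ℝ) * ((u g : ℝ) * (v g : ℝ)) := by exact_mod_cast h1 g
    have hb : (n : ℝ) = Real.sqrt ((n : ℝ) ^ 2) := (Real.sqrt_sq (Nat.cast_nonneg n)).symm
    rw [hb]
    calc Real.sqrt ((n : ℝ) ^ 2)
        ≤ Real.sqrt ((m : ℝ) * ((u g : ℝ) * (v g : ℝ))) := Real.sqrt_le_sqrt ha
      _ = Real.sqrt m * Real.sqrt ((u g : ℝ) * (v g : ℝ)) := Real.sqrt_mul hmR _
  have hsum : (n : ℝ) * n ≤ Real.sqrt m * ∑ g : S, Real.sqrt ((u g : ℝ) * (v g : ℝ)) := by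
    calc (n : ℝ) * n = ∑ _g : S, (n : ℝ) := by
          rw [Finset.sum_const, Finset.card_univ, ← hn, nsmul_eq_mul]
      _ ≤ ∑ g : S, Real.sqrt m * Real.sqrt ((u g : ℝ) * (v g : ℝ)) :=
          Finset.sum_le_sum (fun g _ => hstep g)
      _ = Real.sqrt m * ∑ g : S, Real.sqrt ((u g : ℝ) * (v g : ℝ)) := by
          rw [← Finset.mul_sum]
  have hCS : (∑ g : S, Real.sqrt ((u g : ℝ) * (v g : ℝ))) ^ 2 ≤ (m : ℝ) ^ 2 * (m : ℝ) ^ 2 := by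
    have hcs := Finset.sum_sq_le_sum_mul_sum_of_sq_eq_mul Finset.univ
      (r := fun g : S => Real.sqrt ((u g : ℝ) * (v g : ℝ)))
      (f := fun g : S => (u g : ℝ)) (g := fun g : S => (v g : ℝ))
      (fun _ _ => Nat.cast_nonneg _) (fun _ _ => Nat.cast_nonneg _)
      (fun g _ => Real.sq_sqrt (by positivity))
    refine hcs.trans ?_
    have hsU : ∑ g : S, ((u g : ℝ)) ≤ (m : ℝ) ^ 2 := by exact_mod_cast h2
    have hsW : ∑ g : S, ((v g : ℝ)) ≤ (m : ℝ) ^ 2 := by exact_mod_cast h3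
    have hW0 : (0 : ℝ) ≤ ∑ g : S, ((v g : ℝ)) :=
      Finset.sum_nonneg fun g _ => Nat.cast_nonneg _
    have hmm : (0 : ℝ) ≤ (m : ℝ) ^ 2 := by positivity
    simpa using mul_le_mul hsU hsW hW0 hmm
  have hrpos : 0 ≤ ∑ g : S, Real.sqrt ((u g : ℝ) * (v g : ℝ)) :=
    Finset.sum_nonneg fun g _ => Real.sqrt_nonneg _
  have hrle : ∑ g : S, Real.sqrt ((u g : ℝ) * (v g : ℝ)) ≤ (m : ℝ) ^ 2 := by
    have hCS' : (∑ g : S, Real.sqrt ((u g : ℝ) * (v g : ℝ))) ^ 2 ≤ ((m : ℝ) ^ 2) ^ 2 := by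
      calc (∑ g : S, Real.sqrt ((u g : ℝ) * (v g : ℝ))) ^ 2
          ≤ (m : ℝ) ^ 2 * (m : ℝ) ^ 2 := hCS
        _ = ((m : ℝ) ^ 2) ^ 2 := by ring
    have h := Real.sqrt_le_sqrt hCS'
    rwa [Real.sqrt_sq hrpos, Real.sqrt_sq (by positivity)] at h
  have final : ((n : ℝ)) ^ 4 ≤ (m : ℝ) ^ 5 := by
    have h5 : (n : ℝ) * n ≤ Real.sqrt m * (m : ℝ) ^ 2 :=
      hsum.trans (mul_le_mul_of_nonneg_left hrle (Real.sqrt_nonneg _))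
    have hsq : ((n : ℝ) * n) ^ 2 ≤ (Real.sqrt m * (m : ℝ) ^ 2) ^ 2 :=
      pow_le_pow_left₀ (by positivity) h5 2
    have heq : (Real.sqrt m * (m : ℝ) ^ 2) ^ 2 = (m : ℝ) ^ 5 := by
      rw [mul_pow, Real.sq_sqrt hmR]; ring
    calc ((n : ℝ)) ^ 4 = ((n : ℝ) * n) ^ 2 := by ring
      _ ≤ (Real.sqrt m * (m : ℝ) ^ 2) ^ 2 := hsq
      _ = (m : ℝ) ^ 5 := heq
  exact_mod_cast final

open Finset in
lemma core_cs {S T : Type} [Fintype S] [Fintype T]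
    (x : S → S → S → T) (y z : S → S → S → T × T)
    (hy : ∀ u v u' v' g g', y u v g = y u' v' g' → g = g')
    (hz : ∀ u v u' v' g g', z u v g = z u' v' g' → g = g')
    (hxyz : ∀ u v u' v' g, x u v g = x u' v' g → y u v g = y u' v' g →
      z u v g = z u' v' g → u = u' ∧ v = v') :
    Fintype.card S ^ 4 ≤ Fintype.card T ^ 5 := by
  classical
  set U : S → Finset (T × T) :=
    fun g => Finset.image (fun p : S × S => y p.1 p.2 g) Finset.univ with hU
  set W : S → Finset (T × T) :=
    fun g => Finset.image (fun p : S × S => z p.1 p.2 g) Finset.univ with hW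
  have key1 : ∀ g : S, Fintype.card S ^ 2 ≤
      Fintype.card T * ((U g).card * (W g).card) := by
    intro g
    have hinj : Function.Injective
        (fun p : S × S => (x p.1 p.2 g, y p.1 p.2 g, z p.1 p.2 g)) := by
      rintro ⟨u, v⟩ ⟨u', v'⟩ h
      simp only [Prod.mk.injEq] at h
      obtain ⟨h1, h2, h3⟩ := h
      obtain ⟨rfl, rfl⟩ := hxyz u v u' v' g h1 h2 h3
      rfl
    have hmem : ∀ p : S × S, p ∈ (Finset.univ : Finset (S × S)) →
        (x p.1 p.2 g, y p.1 p.2 g, z p.1 p.2 g) ∈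
          (Finset.univ : Finset T) ×ˢ (U g ×ˢ W g) := by
      intro p _
      refine Finset.mem_product.2 ⟨Finset.mem_univ _, Finset.mem_product.2 ⟨?_, ?_⟩⟩
      · rw [hU]; exact Finset.mem_image.2 ⟨p, Finset.mem_univ _, rfl⟩
      · rw [hW]; exact Finset.mem_image.2 ⟨p, Finset.mem_univ _, rfl⟩
    have h2 := Finset.card_le_card_of_injOn _ hmem (Function.Injective.injOn hinj)
    rw [Finset.card_univ, Fintype.card_prod, Finset.card_product, Finset.card_product,
        Finset.card_univ] at h2
    calc Fintype.card S ^ 2 = Fintype.card S * Fintype.card S := pow_two _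
      _ ≤ Fintype.card T * ((U g).card * (W g).card) := h2
  have sumbound : ∀ (Y : S → Finset (T × T)),
      (∀ g g' : S, g ≠ g' → Disjoint (Y g) (Y g')) →
      ∑ g : S, (Y g).card ≤ Fintype.card T ^ 2 := by
    intro Y hdisj
    have hb := Finset.card_biUnion (s := (Finset.univ : Finset S)) (t := Y)
      (fun g _ g' _ h => hdisj g g' h)
    calc ∑ g : S, (Y g).card = (Finset.univ.biUnion Y).card := hb.symm
      _ ≤ (Finset.univ : Finset (T × T)).card :=
          Finset.card_le_card (Finset.subset_univ _)
      _ = Fintype.card T ^ 2 := by rw [Finset.card_univ, Fintype.card_prod, pow_two]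
  have disjU : ∀ g g' : S, g ≠ g' → Disjoint (U g) (U g') := by
    intro g g' hgg'
    rw [Finset.disjoint_left]
    intro aa haU haU'
    rw [hU] at haU haU'
    simp only [Finset.mem_image] at haU haU'
    obtain ⟨p, -, hp⟩ := haU
    obtain ⟨q, -, hq⟩ := haU'
    exact hgg' (hy p.1 p.2 q.1 q.2 g g' (hp.trans hq.symm))
  have disjW : ∀ g g' : S, g ≠ g' → Disjoint (W g) (W g') := by
    intro g g' hgg'
    rw [Finset.disjoint_left]
    intro aa haU haU'
    rw [hW] at haU haU'
    simp only [Finset.mem_image] at haU haU'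
    obtain ⟨p, -, hp⟩ := haU
    obtain ⟨q, -, hq⟩ := haU'
    exact hgg' (hz p.1 p.2 q.1 q.2 g g' (hp.trans hq.symm))
  have sumU : ∑ g : S, (U g).card ≤ Fintype.card T ^ 2 := sumbound U disjU
  have sumW : ∑ g : S, (W g).card ≤ Fintype.card T ^ 2 := sumbound W disjW
  exact cs_numeric (fun g => (U g).card) (fun g => (W g).card) key1 sumU sumW

lemma card_pow_le_of_inj {S T : Type} [Fintype S] [Fintype T]
    (F : S × S × S × S → T × T × T × T × T) (hF : Function.Injective F) :
    Fintype.card S ^ 4 ≤ Fintype.card T ^ 5 := by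
  have h := Fintype.card_le_of_injective F hF
  have e1 : Fintype.card (S × S × S × S) = Fintype.card S ^ 4 := by
    simp only [Fintype.card_prod]; ring
  have e2 : Fintype.card (T × T × T × T × T) = Fintype.card T ^ 5 := by
    simp only [Fintype.card_prod]; ring
  rw [e1, e2] at h
  exact h

/-- Embedding of three source symbols at three distinct coordinates. -/
def emb3 {K : ℕ} {S : Type} (s₀ : S) (a b c : Fin K) (u v g : S) :
    Fin K → S :=
  fun k => if k = a then u else if k = b then v else if k = c then g else s₀

lemma emb3_a {K : ℕ} {S : Type} (s₀ : S) (a b c : Fin K) (u v g : S) :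
    emb3 s₀ a b c u v g a = u := by simp [emb3]

lemma emb3_b {K : ℕ} {S : Type} (s₀ : S) {a b : Fin K} (c : Fin K)
    (u v g : S) (h : b ≠ a) : emb3 s₀ a b c u v g b = v := by simp [emb3, h]

lemma emb3_c {K : ℕ} {S : Type} (s₀ : S) {a b c : Fin K}
    (u v g : S) (h1 : c ≠ a) (h2 : c ≠ b) : emb3 s₀ a b c u v g c = g := by
  simp [emb3, h1, h2]

/-- Embedding of four source symbols at four distinct coordinates. -/
def emb4 {K : ℕ} {S : Type} (s₀ : S) (a b c d : Fin K) (u v g h : S) :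
    Fin K → S :=
  fun k => if k = a then u else if k = b then v else if k = c then g else
    if k = d then h else s₀

lemma emb4_a {K : ℕ} {S : Type} (s₀ : S) (a b c d : Fin K)
    (u v g h : S) : emb4 s₀ a b c d u v g h a = u := by simp [emb4]

lemma emb4_b {K : ℕ} {S : Type} (s₀ : S) {a b : Fin K} (c d : Fin K)
    (u v g h : S) (h1 : b ≠ a) : emb4 s₀ a b c d u v g h b = v := by simp [emb4, h1]

lemma emb4_c {K : ℕ} {S : Type} (s₀ : S) {a b c : Fin K} (d : Fin K)
    (u v g h : S) (h1 : c ≠ a) (h2 : c ≠ b) : emb4 s₀ a b c d u v g h c = g := by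
  simp [emb4, h1, h2]

lemma emb4_d {K : ℕ} {S : Type} (s₀ : S) {a b c d : Fin K}
    (u v g h : S) (h1 : d ≠ a) (h2 : d ≠ b) (h3 : d ≠ c) :
    emb4 s₀ a b c d u v g h d = h := by simp [emb4, h1, h2, h3]

lemma pair_of_ncard_two {K : ℕ} (s : Set (Fin K)) (k : Fin K)
    (hs : s.ncard = 2) (hk : k ∈ s) : ∃ b, b ≠ k ∧ s = {k, b} := by
  obtain ⟨x, y, hxy, rfl⟩ := Set.ncard_eq_two.mp hs
  rcases Set.mem_insert_iff.mp hk with rfl | hk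
  · exact ⟨y, fun h => hxy h.symm, rfl⟩
  · rw [Set.mem_singleton_iff] at hk
    subst hk
    exact ⟨x, fun h => hxy h, Set.pair_comm x k⟩

/-- A special `2`-color node: for one of its two colors `k`, every node joined to it
by a `W_k`-edge is `1`-color. -/
def IsSpecial2Color {N K : ℕ} (G : LabeledGraph N K) (i : Fin N) : Prop :=
  IsMColor G i 2 ∧ ∃ k ∈ colorSet G i, ∀ j, G.t i j = some k → IsMColor G j 1

/-- A normal `2`-color node: a `2`-color node that is not special. -/
def IsNormal2Color {N K : ℕ} (G : LabeledGraph N K) (i : Fin N) : Prop :=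
  IsMColor G i 2 ∧ ¬ IsSpecial2Color G i

/-- a normal `2`-color node adjacent to a `2`-color node with a different
color set forces `|S|⁴ ≤ |T|⁵`, i.e. symbol rate at most `5/4`. -/
theorem rate_le_of_normal_adjacent {N K : ℕ} (G : LabeledGraph N K) (S T : Type)
    [Fintype S] [Fintype T] (V : Fin N → (Fin K → S) → T)
    (hV : IsStorageCode G S T V)
    (i j : Fin N) (hi : IsNormal2Color G i) (hij : G.t i j ≠ none)
    (hj : IsMColor G j 2) (hdiff : colorSet G i ≠ colorSet G j) :
    Fintype.card S ^ 4 ≤ Fintype.card T ^ 5 := by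
  classical
  obtain ⟨a, hk₀⟩ : ∃ k, G.t i j = some k := Option.ne_none_iff_exists'.mp hij
  have hai : a ∈ colorSet G i := ⟨j, hk₀⟩
  obtain ⟨b, hba, hseti⟩ := pair_of_ncard_two _ a hi.1 hai
  have haj : a ∈ colorSet G j := ⟨i, (G.symm j i).trans hk₀⟩
  obtain ⟨c, hca, hsetj⟩ := pair_of_ncard_two _ a hj haj
  have hcb : c ≠ b := by
    rintro rfl
    exact hdiff (hseti.trans hsetj.symm)
  have hcj : c ∈ colorSet G j := by
    rw [hsetj]; exact Set.mem_insert_iff.mpr (Or.inr rfl)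
  obtain ⟨j₁, hjj₁⟩ := hcj
  have hbi : b ∈ colorSet G i := by
    rw [hseti]; exact Set.mem_insert_iff.mpr (Or.inr rfl)
  have hpex : ∃ p, G.t i p = some b ∧ ¬ IsMColor G p 1 := by
    by_contra hcon
    push_neg at hcon
    exact hi.2 ⟨hi.1, b, hbi, hcon⟩
  obtain ⟨p, hip, hnp⟩ := hpex
  have hbp : b ∈ colorSet G p := ⟨i, (G.symm p i).trans hip⟩
  have hdex : ∃ d, d ∈ colorSet G p ∧ d ≠ b := by
    by_contra hcon
    push_neg at hcon
    apply hnp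
    have hpb : colorSet G p = {b} := Set.eq_singleton_iff_unique_mem.mpr ⟨hbp, hcon⟩
    show (colorSet G p).ncard = 1
    rw [hpb]; exact Set.ncard_singleton b
  obtain ⟨d, hdp, hdb⟩ := hdex
  obtain ⟨p₁, hpp₁⟩ := hdp
  obtain ⟨Da, hDa⟩ := hV i j a hk₀
  obtain ⟨Db, hDb⟩ := hV i p b hip
  obtain ⟨Dc, hDc⟩ := hV j j₁ c hjj₁
  obtain ⟨Dd, hDd⟩ := hV p p₁ d hpp₁
  rcases isEmpty_or_nonempty S with hS | hS
  · have h0 : Fintype.card S = 0 := Fintype.card_eq_zero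
    rw [h0]
    simp
  obtain ⟨s₀⟩ := hS
  by_cases hda : d = a
  · -- doubly decoded color is a : use sources (b, c, a)
    subst hda
    set e := fun u v g : S => emb3 s₀ b c d u v g with he
    apply core_cs (fun u v g => V j₁ (e u v g))
      (fun u v g => (V i (e u v g), V j (e u v g)))
      (fun u v g => (V p (e u v g), V p₁ (e u v g)))
    · intro u v u' v' g g' h
      have h1 : V i (e u v g) = V i (e u' v' g') := congrArg Prod.fst h
      have h2 : V j (e u v g) = V j (e u' v' g') := congrArg Prod.snd h
      have k1 : Da (V i (e u v g)) (V j (e u v g)) = g := by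
        rw [hDa]; exact emb3_c s₀ u v g (Ne.symm hba) (Ne.symm hca)
      have k2 : Da (V i (e u' v' g')) (V j (e u' v' g')) = g' := by
        rw [hDa]; exact emb3_c s₀ u' v' g' (Ne.symm hba) (Ne.symm hca)
      rw [← k1, h1, h2, k2]
    · intro u v u' v' g g' h
      have h1 : V p (e u v g) = V p (e u' v' g') := congrArg Prod.fst h
      have h2 : V p₁ (e u v g) = V p₁ (e u' v' g') := congrArg Prod.snd h
      have k1 : Dd (V p (e u v g)) (V p₁ (e u v g)) = g := by
        rw [hDd]; exact emb3_c s₀ u v g (Ne.symm hba) (Ne.symm hca)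
      have k2 : Dd (V p (e u' v' g')) (V p₁ (e u' v' g')) = g' := by
        rw [hDd]; exact emb3_c s₀ u' v' g' (Ne.symm hba) (Ne.symm hca)
      rw [← k1, h1, h2, k2]
    · intro u v u' v' g hx hy' hz'
      have hy1 : V i (e u v g) = V i (e u' v' g) := congrArg Prod.fst hy'
      have hy2 : V j (e u v g) = V j (e u' v' g) := congrArg Prod.snd hy'
      have hz1 : V p (e u v g) = V p (e u' v' g) := congrArg Prod.fst hz'
      constructor
      · have k1 : Db (V i (e u v g)) (V p (e u v g)) = u := by
          rw [hDb]; exact emb3_a s₀ b c d u v g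
        have k2 : Db (V i (e u' v' g)) (V p (e u' v' g)) = u' := by
          rw [hDb]; exact emb3_a s₀ b c d u' v' g
        rw [← k1, hy1, hz1, k2]
      · have k1 : Dc (V j (e u v g)) (V j₁ (e u v g)) = v := by
          rw [hDc]; exact emb3_b s₀ d u v g hcb
        have k2 : Dc (V j (e u' v' g)) (V j₁ (e u' v' g)) = v' := by
          rw [hDc]; exact emb3_b s₀ d u' v' g hcb
        rw [← k1, hy2, hx, k2]
  by_cases hdc : d = c
  · -- doubly decoded color is c : use sources (a, b, c)
    subst hdc
    set e := fun u v g : S => emb3 s₀ a b d u v g with he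
    apply core_cs (fun u v g => V i (e u v g))
      (fun u v g => (V j (e u v g), V j₁ (e u v g)))
      (fun u v g => (V p (e u v g), V p₁ (e u v g)))
    · intro u v u' v' g g' h
      have h1 : V j (e u v g) = V j (e u' v' g') := congrArg Prod.fst h
      have h2 : V j₁ (e u v g) = V j₁ (e u' v' g') := congrArg Prod.snd h
      have k1 : Dc (V j (e u v g)) (V j₁ (e u v g)) = g := by
        rw [hDc]; exact emb3_c s₀ u v g hca hcb
      have k2 : Dc (V j (e u' v' g')) (V j₁ (e u' v' g')) = g' := by
        rw [hDc]; exact emb3_c s₀ u' v' g' hca hcb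
      rw [← k1, h1, h2, k2]
    · intro u v u' v' g g' h
      have h1 : V p (e u v g) = V p (e u' v' g') := congrArg Prod.fst h
      have h2 : V p₁ (e u v g) = V p₁ (e u' v' g') := congrArg Prod.snd h
      have k1 : Dd (V p (e u v g)) (V p₁ (e u v g)) = g := by
        rw [hDd]; exact emb3_c s₀ u v g hca hcb
      have k2 : Dd (V p (e u' v' g')) (V p₁ (e u' v' g')) = g' := by
        rw [hDd]; exact emb3_c s₀ u' v' g' hca hcb
      rw [← k1, h1, h2, k2]
    · intro u v u' v' g hx hy' hz'
      have hy1 : V j (e u v g) = V j (e u' v' g) := congrArg Prod.fst hy'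
      have hz1 : V p (e u v g) = V p (e u' v' g) := congrArg Prod.fst hz'
      constructor
      · have k1 : Da (V i (e u v g)) (V j (e u v g)) = u := by
          rw [hDa]; exact emb3_a s₀ a b d u v g
        have k2 : Da (V i (e u' v' g)) (V j (e u' v' g)) = u' := by
          rw [hDa]; exact emb3_a s₀ a b d u' v' g
        rw [← k1, hx, hy1, k2]
      · have k1 : Db (V i (e u v g)) (V p (e u v g)) = v := by
          rw [hDb]; exact emb3_b s₀ d u v g hba
        have k2 : Db (V i (e u' v' g)) (V p (e u' v' g)) = v' := by
          rw [hDb]; exact emb3_b s₀ d u' v' g hba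
        rw [← k1, hx, hz1, k2]
  · -- four distinct colors a, b, c, d
    set e := fun q : S × S × S × S => emb4 s₀ a b c d q.1 q.2.1 q.2.2.1 q.2.2.2 with he
    apply card_pow_le_of_inj
      (fun q : S × S × S × S => (V i (e q), V j (e q), V p (e q), V j₁ (e q), V p₁ (e q)))
    rintro ⟨u, v, g, h⟩ ⟨u', v', g', h'⟩ heq
    simp only [Prod.mk.injEq] at heq
    obtain ⟨e1, e2, e3, e4, e5⟩ := heq
    have hu : u = u' := by
      have k1 : Da (V i (e (u, v, g, h))) (V j (e (u, v, g, h))) = u := by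
        rw [hDa]; exact emb4_a s₀ a b c d u v g h
      have k2 : Da (V i (e (u', v', g', h'))) (V j (e (u', v', g', h'))) = u' := by
        rw [hDa]; exact emb4_a s₀ a b c d u' v' g' h'
      rw [← k1, e1, e2, k2]
    have hv : v = v' := by
      have k1 : Db (V i (e (u, v, g, h))) (V p (e (u, v, g, h))) = v := by
        rw [hDb]; exact emb4_b s₀ c d u v g h hba
      have k2 : Db (V i (e (u', v', g', h'))) (V p (e (u', v', g', h'))) = v' := by
        rw [hDb]; exact emb4_b s₀ c d u' v' g' h' hba
      rw [← k1, e1, e3, k2]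
    have hg : g = g' := by
      have k1 : Dc (V j (e (u, v, g, h))) (V j₁ (e (u, v, g, h))) = g := by
        rw [hDc]; exact emb4_c s₀ d u v g h hca hcb
      have k2 : Dc (V j (e (u', v', g', h'))) (V j₁ (e (u', v', g', h'))) = g' := by
        rw [hDc]; exact emb4_c s₀ d u' v' g' h' hca hcb
      rw [← k1, e2, e4, k2]
    have hh : h = h' := by
      have k1 : Dd (V p (e (u, v, g, h))) (V p₁ (e (u, v, g, h))) = h := by
        rw [hDd]; exact emb4_d s₀ u v g h hda hdb hdc
      have k2 : Dd (V p (e (u', v', g', h'))) (V p₁ (e (u', v', g', h'))) = h' := by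
        rw [hDd]; exact emb4_d s₀ u' v' g' h' hda hdb hdc
      rw [← k1, e3, e5, k2]
    rw [hu, hv, hg, hh]
end

section
/- Let {i,j} be a W_k-edge of a labeled graph (t i j = some k) and fix a storage code over the graph. Then for every source tuple w : Fin K → S, letting A(w) = {V i w' | w' : Fin K → S and w' agrees with w on every coordinate other than k}, one has |S| ≤ |T| · |A(w)|. (This is the combinatorial form of the lower bound that any node incident to a W_k-edge must carry at least L_w − L_v bits of information about W_k: its k-th-coordinate fiber image has size at least |S|/|T|.) -/
/-- for a `W_k`-edge `{i, j}` and any source tuple `w`, the image at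
node `i` of the fiber of tuples agreeing with `w` away from coordinate `k` satisfies
`|S| ≤ |T| · |A(w)|`. -/
theorem fiber_image_lower_bound {N K : ℕ} (G : LabeledGraph N K) (S T : Type)
    [Fintype S] [Fintype T] (V : Fin N → (Fin K → S) → T)
    (hV : IsStorageCode G S T V)
    (i j : Fin N) (k : Fin K) (hij : G.t i j = some k) (w : Fin K → S) :
    Fintype.card S ≤ Fintype.card T *
      {x : T | ∃ w' : Fin K → S, (∀ k', k' ≠ k → w' k' = w k') ∧ V i w' = x}.ncard := by
  classical
  obtain ⟨D, hD⟩ := hV i j k hij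
  set A : Set T := {x : T | ∃ w' : Fin K → S, (∀ k', k' ≠ k → w' k' = w k') ∧ V i w' = x}
    with hA
  let f : S → T × T := fun s =>
    (V i (Function.update w k s), V j (Function.update w k s))
  have hf : ∀ s, f s ∈ A.toFinset ×ˢ (Finset.univ : Finset T) := by
    intro s
    simp only [Finset.mem_product, Set.mem_toFinset, Finset.mem_univ, and_true, hA,
      Set.mem_setOf_eq]
    exact ⟨Function.update w k s, fun k' hk' => Function.update_of_ne hk' _ _, rfl⟩
  have hinj : Function.Injective f := by
    intro a b hab
    have ha := hD (Function.update w k a)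
    have hb := hD (Function.update w k b)
    simp only [Function.update_self] at ha hb
    have : D (f a).1 (f a).2 = a := ha
    rw [hab] at this
    rw [← this]
    exact hb
  have hcard := Finset.card_le_card_of_injOn (s := Finset.univ) f (fun s _ => hf s) (fun a _ b _ h => hinj h)
  simp only [Finset.card_univ, Finset.card_product, Set.toFinset_card] at hcard
  have : A.ncard = Fintype.card A := by
    rw [Set.ncard_eq_toFinset_card', Set.toFinset_card]
  rw [this, Nat.mul_comm]
  exact hcard
end
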